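/- arXiv:2501.07140 — 8 statements merged into one kernel-verified Lean document; each statement's English description precedes it below -/
import Mathlib

section
/- Let A be an R-module. If there exists a surjection p : P → A with P projective such that A ⊕ P is quasi-projective, then A is projective. -/
universe u v

/-- A module `Q` is quasi-projective if for every surjection `g : Q → B`,
every homomorphism `f : Q → B` factors through `g` via an endomorphism of `Q`. -/
def IsQuasiProjective (R : Type u) [Ring R] (Q : Type v) [AddCommGroup Q] [Module R Q] : Prop :=
  ∀ (B : Type v) (_ : AddCommGroup B) (_ : Module R B) (g : Q →ₗ[R] B),
    Function.Surjective g → ∀ f : Q →ₗ[R] B, ∃ h : Q →ₗ[R] Q, f = g.comp h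

/-- If there exists a surjection `p : P → A` with `P` projective such that
`A ⊕ P` is quasi-projective, then `A` is projective. -/
theorem projective_of_quasiProjective_prod (R : Type u) [Ring R]
    (A : Type v) [AddCommGroup A] [Module R A]
    (P : Type v) [AddCommGroup P] [Module R P]
    (hP : Module.Projective R P) (p : P →ₗ[R] A) (hp : Function.Surjective p)
    (hAP : IsQuasiProjective R (A × P)) :
    Module.Projective R A := by
  -- g : A × P → A, (a, q) ↦ p q, surjective
  have hg : Function.Surjective (p.comp (LinearMap.snd R A P)) := by
    intro a
    obtain ⟨q, hq⟩ := hp a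
    exact ⟨(0, q), hq⟩
  obtain ⟨h, hh⟩ := hAP A inferInstance inferInstance (p.comp (LinearMap.snd R A P)) hg
    (LinearMap.fst R A P)
  -- section s : A → P, a ↦ snd (h (a, 0))
  set s : A →ₗ[R] P := (LinearMap.snd R A P).comp (h.comp (LinearMap.inl R A P)) with hs
  have hsec : p.comp s = LinearMap.id := by
    ext a
    have := congrArg (fun f : (A × P) →ₗ[R] A => f (a, 0)) hh
    simpa [s] using this.symm
  exact Module.Projective.of_split s p hsec
end

section
/- Let P be a projective R-module and let f : Q → P be a surjection with Q quasi-projective and f an essential epimorphism (a quasi-projective cover of P). Then f is an isomorphism; in particular Q ≅ P. -/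
universe u v

/-- A surjection `f : B → C` is essential if for every homomorphism `g : X → B`,
surjectivity of `f ∘ g` implies surjectivity of `g`. -/
def IsEssentialEpi (R : Type u) [Ring R] {B C : Type v} [AddCommGroup B] [Module R B]
    [AddCommGroup C] [Module R C] (f : B →ₗ[R] C) : Prop :=
  ∀ (X : Type v) (_ : AddCommGroup X) (_ : Module R X) (g : X →ₗ[R] B),
    Function.Surjective (f.comp g) → Function.Surjective g

/-- A quasi-projective cover of a projective module is an isomorphism. -/
theorem quasiProjectiveCover_of_projective_isIso (R : Type u) [Ring R]
    (P : Type v) [AddCommGroup P] [Module R P]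
    (Q : Type v) [AddCommGroup Q] [Module R Q]
    (hP : Module.Projective R P) (hQ : IsQuasiProjective R Q)
    (f : Q →ₗ[R] P) (hf : Function.Surjective f) (he : IsEssentialEpi R f) :
    Function.Bijective f := by
  obtain ⟨s, hs⟩ := Module.projective_lifting_property f LinearMap.id hf
  have hsinj : Function.Injective s := by
    intro a b hab
    have := congrArg f hab
    have ha : f (s a) = a := congrFun (congrArg (fun g => g.toFun) hs) a
    have hb : f (s b) = b := congrFun (congrArg (fun g => g.toFun) hs) b
    rw [ha, hb] at this
    exact this
  have hcomp : Function.Surjective (f.comp (s.comp f)) := by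
    have : f.comp (s.comp f) = f := by
      rw [← LinearMap.comp_assoc, hs, LinearMap.id_comp]
    rw [this]; exact hf
  have hsf : Function.Surjective (s.comp f) := he Q _ _ (s.comp f) hcomp
  have hssurj : Function.Surjective s := fun q => by
    obtain ⟨x, hx⟩ := hsf q; exact ⟨f x, hx⟩
  have hsbij : Function.Bijective s := ⟨hsinj, hssurj⟩
  constructor
  · intro a b hab
    obtain ⟨a', rfl⟩ := hssurj a
    obtain ⟨b', rfl⟩ := hssurj b
    have ha : f (s a') = a' := congrFun (congrArg (fun g => g.toFun) hs) a'
    have hb : f (s b') = b' := congrFun (congrArg (fun g => g.toFun) hs) b'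
    rw [ha, hb] at hab
    rw [hab]
  · exact hf
end

section
/- If every R-module possesses a quasi-projective cover, then every R-module possesses a projective cover (i.e., R is semiperfect when R has enough projectives, which module categories always do). -/
/-!
Choose a free module `F` mapping onto `A` and a quasi-projective cover `e : Q → F × A`.
Lifting `F → F × A` through `e` shows that the kernel `K` of `Q → F` is a direct summand of
`Q`, and `e` restricts to an essential epimorphism `K → A`. A lift `t : F → K` of `F → A` is
then surjective by essentiality. Quasi-projectivity of `Q` lets the surjection
`Q → F → K` be split, so `K` is a direct summand of `F`, hence projective.
-/

open CategoryTheory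

universe u
variable {R : Type u} [Ring R]

/-- A module `Q` is quasi-projective if every homomorphism from `Q` to a quotient
of `Q` lifts to an endomorphism of `Q`. -/
def QuasiProjective (Q : ModuleCat.{u} R) : Prop :=
  ∀ (B : ModuleCat.{u} R) (g : Q ⟶ B), Function.Surjective g →
    ∀ f : Q ⟶ B, ∃ h : Q ⟶ Q, h ≫ g = f

/-- An epimorphism `f : B → C` is essential if for every `g : X → B`,
surjectivity of `f ∘ g` implies surjectivity of `g`. -/
def EssentialEpi {B C : ModuleCat.{u} R} (f : B ⟶ C) : Prop :=
  ∀ (X : ModuleCat.{u} R) (g : X ⟶ B), Function.Surjective (g ≫ f) → Function.Surjective g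

open LinearMap

theorem QuasiProjective.exists_comp_eq {Q : ModuleCat.{u} R} (hQ : QuasiProjective Q)
    {B : Type u} [AddCommGroup B] [Module R B] {g : Q →ₗ[R] B} (hg : Function.Surjective g)
    (f : Q →ₗ[R] B) : ∃ h : Q →ₗ[R] Q, g ∘ₗ h = f := by
  obtain ⟨h, hh⟩ := hQ (ModuleCat.of R B) (ModuleCat.ofHom g) hg (ModuleCat.ofHom f)
  exact ⟨h.hom, congrArg ModuleCat.Hom.hom hh⟩

theorem QuasiProjective.exists_rightInverse_of_retract {Q : ModuleCat.{u} R}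
    (hQ : QuasiProjective Q) {N : Type u} [AddCommGroup N] [Module R N]
    {j : N →ₗ[R] Q} {r : Q →ₗ[R] N} (hrj : r ∘ₗ j = LinearMap.id) {g : Q →ₗ[R] N}
    (hg : Function.Surjective g) : ∃ σ : N →ₗ[R] Q, g ∘ₗ σ = LinearMap.id := by
  obtain ⟨h, hh⟩ := hQ.exists_comp_eq hg r
  exact ⟨h ∘ₗ j, by rw [← comp_assoc, hh, hrj]⟩

theorem QuasiProjective.projective_of_retract {Q : ModuleCat.{u} R} (hQ : QuasiProjective Q)
    {N : Type u} [AddCommGroup N] [Module R N] {j : N →ₗ[R] Q} {r : Q →ₗ[R] N}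
    (hrj : r ∘ₗ j = LinearMap.id) {F : Type u} [AddCommGroup F] [Module R F] [Module.Projective R F]
    {a : Q →ₗ[R] F} {t : F →ₗ[R] N} (hta : Function.Surjective (t ∘ₗ a)) :
    Module.Projective R N := by
  obtain ⟨σ, hσ⟩ := hQ.exists_rightInverse_of_retract hrj hta
  exact Module.Projective.of_split (a ∘ₗ σ) t (by rw [← hσ, comp_assoc])

theorem essentialEpi_ofHom_iff {M N : Type u} [AddCommGroup M] [Module R M] [AddCommGroup N]
    [Module R N] (f : M →ₗ[R] N) :
    EssentialEpi (ModuleCat.ofHom f) ↔ ∀ (X : Type u) [AddCommGroup X] [Module R X]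
      (g : X →ₗ[R] M), Function.Surjective (f ∘ₗ g) → Function.Surjective g :=
  ⟨fun hf X _ _ g => hf (ModuleCat.of R X) (ModuleCat.ofHom g),
    fun hf X g => hf X g.hom⟩

theorem LinearMap.exists_retraction_ker {Q F : Type*} [AddCommGroup Q] [Module R Q]
    [AddCommGroup F] [Module R F] {φ : Q →ₗ[R] F} {s : F →ₗ[R] Q} (hs : φ ∘ₗ s = LinearMap.id) :
    ∃ ρ : Q →ₗ[R] ker φ, ρ ∘ₗ (ker φ).subtype = LinearMap.id := by
  have hmem (q : Q) : q - s (φ q) ∈ ker φ := by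
    simp only [mem_ker, map_sub, ← comp_apply φ s, hs, id_apply, sub_self]
  refine ⟨codRestrict _ (id - s ∘ₗ φ) hmem, ?_⟩
  ext ⟨k, hk⟩
  simp [mem_ker.mp hk]

section KernelOfFst

variable {Q F A : Type u} [AddCommGroup Q] [Module R Q] [AddCommGroup F] [Module R F]
  [AddCommGroup A] [Module R A] {e : Q →ₗ[R] F × A}

theorem surjective_domRestrict_ker_fst (he : Function.Surjective e) :
    Function.Surjective ((snd R F A ∘ₗ e).domRestrict (ker (fst R F A ∘ₗ e))) := by
  intro a
  obtain ⟨q, hq⟩ := he (0, a)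
  exact ⟨⟨q, by simp [hq]⟩, by simp [hq]⟩

theorem essentialEpi_domRestrict_ker_fst {s : F →ₗ[R] Q} (hs : e ∘ₗ s = inl R F A)
    (he : EssentialEpi (ModuleCat.ofHom e)) :
    EssentialEpi (ModuleCat.ofHom ((snd R F A ∘ₗ e).domRestrict (ker (fst R F A ∘ₗ e)))) := by
  have hes (y : F) : e (s y) = (y, 0) := congr($hs y)
  rw [essentialEpi_ofHom_iff] at he ⊢
  intro X _ _ g hg
  have hgK (x : X) : (e (g x)).1 = 0 := (g x).2
  -- `X × F → Q, (x, y) ↦ g x + s y` is surjective since `e` is essential.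
  have hg' : Function.Surjective (e ∘ₗ coprod ((ker (fst R F A ∘ₗ e)).subtype ∘ₗ g) s) := by
    rintro ⟨y, a⟩
    obtain ⟨x, hx⟩ := hg a
    refine ⟨(x, y), Prod.ext ?_ ?_⟩ <;> simp_all
  intro k
  obtain ⟨⟨x, y⟩, hxy⟩ := he _ _ hg' k
  have hy : y = 0 := by
    have hk : (e k).1 = 0 := k.2
    simpa [← hxy, hes, hgK] using hk
  exact ⟨x, Subtype.ext (by simpa [hy] using hxy)⟩

end KernelOfFst

/-- If every module possesses a quasi-projective cover, then every module possesses
a projective cover. -/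
theorem projective_covers_of_quasiProjective_covers
    (h : ∀ A : ModuleCat.{u} R, ∃ (Q : ModuleCat.{u} R) (f : Q ⟶ A),
      QuasiProjective Q ∧ Function.Surjective f ∧ EssentialEpi f) :
    ∀ A : ModuleCat.{u} R, ∃ (P : ModuleCat.{u} R) (f : P ⟶ A),
      Module.Projective R P ∧ Function.Surjective f ∧ EssentialEpi f := by
  intro A
  obtain ⟨Q, e, hQ, he, he_ess⟩ := h (ModuleCat.of R ((A →₀ R) × A))
  obtain ⟨s, hs⟩ := Module.projective_lifting_property e.hom (inl R (A →₀ R) A) he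
  set K := ker (fst R (A →₀ R) A ∘ₗ e.hom)
  set f := (snd R (A →₀ R) A ∘ₗ e.hom).domRestrict K
  have hf : Function.Surjective f := surjective_domRestrict_ker_fst he
  have hf_ess : EssentialEpi (ModuleCat.ofHom f) := essentialEpi_domRestrict_ker_fst hs he_ess
  obtain ⟨t, ht⟩ := Module.projective_lifting_property f (Finsupp.linearCombination R id) hf
  have ht_surj : Function.Surjective t := (essentialEpi_ofHom_iff f).1 hf_ess _ t
    (ht ▸ Finsupp.linearCombination_id_surjective R A)
  obtain ⟨ρ, hρ⟩ := exists_retraction_ker (φ := fst R (A →₀ R) A ∘ₗ e.hom) (s := s)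
    (by rw [comp_assoc, hs, fst_comp_inl])
  have hK : Module.Projective R K :=
    QuasiProjective.projective_of_retract hQ hρ (a := fst R (A →₀ R) A ∘ₗ e.hom)
      (ht_surj.comp (Prod.fst_surjective.comp he))
  exact ⟨ModuleCat.of R K, ModuleCat.ofHom f, hK, hf, hf_ess⟩
end

section
/- Let 0 → A → B → C → 0 be a short exact sequence of R-modules with C quasi-Gorenstein projective. Then for every quasi-projective module Q, the induced sequence 0 → Hom(C,Q) → Hom(B,Q) → Hom(A,Q) → 0 is exact. -/
/-!
`Hom(-, Q)` is left exact, so only the surjectivity of `Hom(B, Q) → Hom(A, Q)` needs an argument.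
Write `C ≅ K₀` as the cokernel of `ι : K₁ → P₀`. Projectivity of `P₀` lifts `P₀ → C` to
`p : P₀ → B`, whose restriction to `K₁` lands in `A`, giving `q : K₁ → A`. As `Q` is
quasi-projective, `α ∘ q` extends along `ι` to some `β : P₀ → Q`. The ladder of short exact
sequences makes `B` the pushout of `P₀ ← K₁ → A`, so `(β, α)` descends to `B → Q` extending `α`.
-/

open CategoryTheory

universe u
variable {R : Type u} [Ring R]

/-- `M` is quasi-Gorenstein projective if it is a syzygy of an exact complex of
projective modules (given by short exact sequences `0 → K (n+1) → P n → K n → 0`)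
that remains exact under `Hom(-, Q)` for every quasi-projective module `Q`. -/
def QuasiGorensteinProjective (M : ModuleCat.{u} R) : Prop :=
  ∃ (K P : ℤ → ModuleCat.{u} R) (ι : ∀ n, K (n + 1) ⟶ P n) (π : ∀ n, P n ⟶ K n),
    (∀ n, Module.Projective R (P n)) ∧
    (∀ n, Function.Injective (ι n)) ∧
    (∀ n, Function.Surjective (π n)) ∧
    (∀ n, Function.Exact (ι n) (π n)) ∧
    (∀ n (Q : ModuleCat.{u} R), QuasiProjective Q →
      ∀ f : K (n + 1) ⟶ Q, ∃ g : P n ⟶ Q, ι n ≫ g = f) ∧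
    Nonempty (M ≅ K 0)

namespace LinearMap

variable {K P A B C Q : Type*} [AddCommGroup K] [AddCommGroup P] [AddCommGroup A]
  [AddCommGroup B] [AddCommGroup C] [AddCommGroup Q] [Module R K] [Module R P] [Module R A]
  [Module R B] [Module R C] [Module R Q]

theorem exists_comp_eq_of_ker_le {t : B →ₗ[R] C} (ht : Function.Surjective t) {s : B →ₗ[R] Q}
    (hts : ker t ≤ ker s) : ∃ u : C →ₗ[R] Q, u ∘ₗ t = s :=
  ⟨(ker t).liftQ s hts ∘ₗ (t.quotKerEquivOfSurjective ht).symm.toLinearMap, by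
    ext x
    simp⟩

theorem exists_comp_eq_of_range_le {f : A →ₗ[R] B} (hf : Function.Injective f) {h : K →ₗ[R] B}
    (hfh : range h ≤ range f) : ∃ q : K →ₗ[R] A, f ∘ₗ q = h :=
  ⟨(LinearEquiv.ofInjective f hf).symm.toLinearMap ∘ₗ h.codRestrict _ fun x => hfh ⟨x, rfl⟩, by
    ext x
    simp⟩

section Ladder

variable {ι : K →ₗ[R] P} {π : P →ₗ[R] C} {f : A →ₗ[R] B} {g : B →ₗ[R] C} {q : K →ₗ[R] A}
  {p : P →ₗ[R] B}

theorem surjective_coprod_of_ladder (hπ : Function.Surjective π) (hfg : Function.Exact f g)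
    (hp : g ∘ₗ p = π) : Function.Surjective (p.coprod f) := by
  intro b
  obtain ⟨x, hx⟩ := hπ (g b)
  obtain ⟨a, ha⟩ := (hfg (b - p x)).1 (by simp [← hx, ← hp])
  exact ⟨(x, a), by simp [ha]⟩

theorem ker_coprod_le_of_ladder (hιπ : Function.Exact ι π) (hf : Function.Injective f)
    (hfg : Function.Exact f g) (hq : f ∘ₗ q = p ∘ₗ ι) (hp : g ∘ₗ p = π)
    {α : A →ₗ[R] Q} {β : P →ₗ[R] Q} (hβ : β ∘ₗ ι = α ∘ₗ q) :
    ker (p.coprod f) ≤ ker (β.coprod α) := by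
  rintro ⟨x, a⟩ hxa
  replace hxa : p x + f a = 0 := hxa
  obtain ⟨k, rfl⟩ := (hιπ x).1 <| by
    rw [← hp, comp_apply, eq_neg_of_add_eq_zero_left hxa, map_neg, hfg.apply_apply_eq_zero,
      neg_zero]
  have ha : a = -q k := hf <| by
    rw [map_neg, ← comp_apply f q, hq, comp_apply, eq_neg_of_add_eq_zero_right hxa]
  show β (ι k) + α a = 0
  rw [← comp_apply β ι, hβ, ha, map_neg, comp_apply, add_neg_cancel]

theorem exists_comp_eq_of_ladder (hιπ : Function.Exact ι π) (hπ : Function.Surjective π)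
    (hf : Function.Injective f) (hfg : Function.Exact f g) (hq : f ∘ₗ q = p ∘ₗ ι)
    (hp : g ∘ₗ p = π) (α : A →ₗ[R] Q) {β : P →ₗ[R] Q} (hβ : β ∘ₗ ι = α ∘ₗ q) :
    ∃ ψ : B →ₗ[R] Q, ψ ∘ₗ f = α := by
  obtain ⟨ψ, hψ⟩ := exists_comp_eq_of_ker_le (surjective_coprod_of_ladder hπ hfg hp)
    (ker_coprod_le_of_ladder hιπ hf hfg hq hp hβ)
  exact ⟨ψ, by rw [← coprod_inr p f, ← comp_assoc, hψ, coprod_inr]⟩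

end Ladder

end LinearMap

namespace ModuleCat

variable {A B C : ModuleCat.{u} R} {f : A ⟶ B} {g : B ⟶ C}

theorem precomp_injective_of_surjective (hg : Function.Surjective g) (Q : ModuleCat.{u} R) :
    Function.Injective (fun φ : C ⟶ Q => g ≫ φ) :=
  have := (epi_iff_surjective g).2 hg
  fun _ _ h => (cancel_epi g).1 h

theorem exact_precomp_of_exact (hg : Function.Surjective g) (hfg : Function.Exact f g)
    (Q : ModuleCat.{u} R) :
    Function.Exact (fun φ : C ⟶ Q => g ≫ φ) (fun ψ : B ⟶ Q => f ≫ ψ) := by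
  intro ψ
  constructor
  · intro hψ
    obtain ⟨u, hu⟩ := LinearMap.exists_comp_eq_of_ker_le (t := g.hom) hg (s := ψ.hom) <| by
      rw [hfg.linearMap_ker_eq]
      rintro _ ⟨a, rfl⟩
      exact congr($hψ a)
    exact ⟨ofHom u, hom_ext hu⟩
  · rintro ⟨φ, rfl⟩
    have hfg₀ : f ≫ g = 0 := hom_ext hfg.linearMap_comp_eq_zero
    change f ≫ g ≫ φ = 0
    rw [← Category.assoc, hfg₀, Limits.zero_comp]

end ModuleCat

theorem QuasiGorensteinProjective.precomp_surjective {A B C : ModuleCat.{u} R} {f : A ⟶ B}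
    {g : B ⟶ C} (hf : Function.Injective f) (hg : Function.Surjective g)
    (hfg : Function.Exact f g) (hC : QuasiGorensteinProjective C) {Q : ModuleCat.{u} R}
    (hQ : QuasiProjective Q) : Function.Surjective (fun ψ : B ⟶ Q => f ≫ ψ) := by
  obtain ⟨K, P, ι, π, hP, -, hπ, hιπ, hlift, ⟨e⟩⟩ := hC
  have := hP 0
  have he := ConcreteCategory.bijective_of_isIso e.inv
  have hιπ' : Function.Exact (ι 0).hom (e.inv.hom ∘ₗ (π 0).hom) :=
    (hιπ 0).comp_injective _ he.1 (map_zero e.inv.hom)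
  have hπ' : Function.Surjective (e.inv.hom ∘ₗ (π 0).hom) := he.2.comp (hπ 0)
  obtain ⟨p, hp⟩ := Module.projective_lifting_property g.hom (e.inv.hom ∘ₗ (π 0).hom) hg
  obtain ⟨q, hq⟩ := LinearMap.exists_comp_eq_of_range_le hf (h := p ∘ₗ (ι 0).hom) <| by
    rintro _ ⟨k, rfl⟩
    refine (hfg _).1 ?_
    rw [← LinearMap.comp_apply g.hom, ← LinearMap.comp_assoc, hp]
    exact hιπ'.apply_apply_eq_zero k
  intro α
  obtain ⟨β, hβ⟩ := hlift 0 Q hQ (ModuleCat.ofHom (α.hom ∘ₗ q))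
  obtain ⟨ψ, hψ⟩ := LinearMap.exists_comp_eq_of_ladder hιπ' hπ' hf hfg hq hp α.hom
    (β := β.hom) (congr_arg ModuleCat.Hom.hom hβ)
  exact ⟨ModuleCat.ofHom ψ, ModuleCat.hom_ext hψ⟩

/-- For a short exact sequence `0 → A → B → C → 0` with `C` quasi-Gorenstein projective,
the sequence `0 → Hom(C,Q) → Hom(B,Q) → Hom(A,Q) → 0` is exact for every
quasi-projective `Q`. -/
theorem hom_exact_of_quasiGorensteinProjective
    {A B C : ModuleCat.{u} R} (f : A ⟶ B) (g : B ⟶ C)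
    (hf : Function.Injective f) (hg : Function.Surjective g)
    (hfg : Function.Exact f g) (hC : QuasiGorensteinProjective C)
    (Q : ModuleCat.{u} R) (hQ : QuasiProjective Q) :
    Function.Injective (fun φ : C ⟶ Q => g ≫ φ) ∧
    Function.Exact (fun φ : C ⟶ Q => g ≫ φ) (fun ψ : B ⟶ Q => f ≫ ψ) ∧
    Function.Surjective (fun ψ : B ⟶ Q => f ≫ ψ) :=
  ⟨ModuleCat.precomp_injective_of_surjective hg Q, ModuleCat.exact_precomp_of_exact hg hfg Q,
    hC.precomp_surjective hf hg hfg hQ⟩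
end

section
/- If G is a quasi-Gorenstein projective R-module and Q is a quasi-projective R-module, then Ext^n(G, Q) = 0 for all n ≥ 1. -/
/-!
The short exact sequences `0 → K (n+1) → P n → K n → 0` with `n ≥ 0` splice into a projective
resolution `⋯ → P 1 → P 0` of `G ≅ K 0`, so `Ext^(n+1)(G, Q)` is the cohomology of `Hom(P, Q)`
at `P (n+1)`. A cocycle `x : P (n+1) ⟶ Q` vanishes on the image of `K (n+2)`, hence factors
through `P (n+1) ↠ K (n+1)`; since `Q` is quasi-projective the factor extends along
`K (n+1) ↪ P n`, which exhibits `x` as a coboundary.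
-/

open CategoryTheory

universe u
variable {R : Type u} [Ring R]

open Limits

lemma ChainComplex.exactAt_linearYonedaObj_succ_iff {C : Type*} [Category C] [Abelian C]
    {X : ChainComplex C ℕ} (A : Type*) [Ring A] [Linear A C] (Y : C) (n : ℕ) :
    (X.linearYonedaObj A Y).ExactAt (n + 1) ↔
      ∀ x : X.X (n + 1) ⟶ Y, X.d (n + 2) (n + 1) ≫ x = 0 →
        ∃ y : X.X n ⟶ Y, X.d (n + 1) n ≫ y = x := by
  rw [HomologicalComplex.exactAt_iff' _ n (n + 1) (n + 2) (by simp) (by simp),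
    ShortComplex.moduleCat_exact_iff]
  rfl

namespace CategoryTheory

variable {C : Type*} [Category C] [Abelian C]

lemma ShortComplex.Exact.mk_epi_comp_comp_mono {S : ShortComplex C} (hS : S.Exact)
    {X₀ X₄ : C} (e : X₀ ⟶ S.X₁) (m : S.X₃ ⟶ X₄) [Epi e] [Mono m]
    {f : X₀ ⟶ S.X₂} {g : S.X₂ ⟶ X₄} (hf : f = e ≫ S.f) (hg : g = S.g ≫ m) (w : f ≫ g = 0) :
    (ShortComplex.mk f g w).Exact := by
  subst hf hg
  let φ : ShortComplex.mk (e ≫ S.f) (S.g ≫ m) w ⟶ ShortComplex.mk S.f (S.g ≫ m) (by simp) :=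
    { τ₁ := e, τ₂ := 𝟙 _, τ₃ := 𝟙 _ }
  let ψ : S ⟶ ShortComplex.mk S.f (S.g ≫ m) (by simp) :=
    { τ₁ := 𝟙 _, τ₂ := 𝟙 _, τ₃ := m }
  rw [ShortComplex.exact_iff_of_epi_of_isIso_of_mono φ,
    ← ShortComplex.exact_iff_of_epi_of_isIso_of_mono ψ]
  exact hS

section Splice

variable {K P : ℕ → C} (ι : ∀ n, K (n + 1) ⟶ P n) (π : ∀ n, P n ⟶ K n)
  (w : ∀ n, ι n ≫ π n = 0)

def spliceComplex : ChainComplex C ℕ :=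
  ChainComplex.of P (fun n => π (n + 1) ≫ ι n) fun n => by
    simp only [Category.assoc, reassoc_of% (w (n + 1)), zero_comp, comp_zero]

lemma spliceComplex_d (n : ℕ) : (spliceComplex ι π w).d (n + 1) n = π (n + 1) ≫ ι n := by
  simp [spliceComplex]

lemma spliceComplex_d_comp (n : ℕ) {Y : C} (x : P n ⟶ Y) :
    (spliceComplex ι π w).d (n + 1) n ≫ x = π (n + 1) ≫ ι n ≫ x :=
  (congrArg (· ≫ x) (spliceComplex_d ι π w n)).trans (Category.assoc _ _ _)

lemma spliceComplex_d_comp_π : (spliceComplex ι π w).d 1 0 ≫ π 0 = 0 :=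
  (spliceComplex_d_comp ι π w 0 (π 0)).trans ((π 1 ≫= w 0).trans comp_zero)

variable {ι π w}

lemma spliceComplex_exactAt_succ (hS : ∀ n, (ShortComplex.mk (ι n) (π n) (w n)).ShortExact)
    (n : ℕ) : (spliceComplex ι π w).ExactAt (n + 1) := by
  rw [HomologicalComplex.exactAt_iff' _ (n + 2) (n + 1) n (by simp) (by simp)]
  have := (hS n).mono_f
  have := (hS (n + 2)).epi_g
  exact (hS (n + 1)).exact.mk_epi_comp_comp_mono (π (n + 2)) (ι n)
    (spliceComplex_d ι π w (n + 1)) (spliceComplex_d ι π w n) _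

lemma spliceComplex_exact_zero (hS : ∀ n, (ShortComplex.mk (ι n) (π n) (w n)).ShortExact) :
    (ShortComplex.mk ((spliceComplex ι π w).d 1 0) (π 0)
      (spliceComplex_d_comp_π ι π w)).Exact := by
  have := (hS 1).epi_g
  exact (hS 0).exact.mk_epi_comp_comp_mono (π 1) (𝟙 _)
    (spliceComplex_d ι π w 0) (Category.comp_id _).symm _

noncomputable def spliceResolution (hS : ∀ n, (ShortComplex.mk (ι n) (π n) (w n)).ShortExact)
    [∀ n, Projective (P n)] : ProjectiveResolution (K 0) where
  complex := spliceComplex ι π w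
  projective n := inferInstanceAs (Projective (P n))
  π := (ChainComplex.toSingle₀Equiv _ _).symm ⟨π 0, spliceComplex_d_comp_π ι π w⟩
  quasiIso := ⟨fun n => by
    cases n with
    | zero =>
      rw [ChainComplex.quasiIsoAt₀_iff, ShortComplex.quasiIso_iff_of_zeros']
      · refine (ShortComplex.exact_and_epi_g_iff_of_iso ?_).2
          ⟨spliceComplex_exact_zero hS, (hS 0).epi_g⟩
        exact ShortComplex.isoMk (Iso.refl _) (Iso.refl _) (Iso.refl _)
          ((Category.id_comp _).trans (Category.comp_id _).symm)
          ((Category.id_comp _).trans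
            ((ChainComplex.toSingle₀Equiv_symm_apply_f_zero (C := spliceComplex ι π w) (π 0)
              (spliceComplex_d_comp_π ι π w)).symm.trans (Category.comp_id _).symm))
      all_goals rfl
    | succ n =>
      rw [quasiIsoAt_iff_exactAt' _ _ (ChainComplex.exactAt_succ_single_obj _ _)]
      exact spliceComplex_exactAt_succ hS n⟩

lemma spliceComplex_linearYonedaObj_exactAt_succ
    (hS : ∀ n, (ShortComplex.mk (ι n) (π n) (w n)).ShortExact) (A : Type*) [Ring A] [Linear A C]
    (Y : C) (n : ℕ) (hY : ∀ f : K (n + 1) ⟶ Y, ∃ g : P n ⟶ Y, ι n ≫ g = f) :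
    ((spliceComplex ι π w).linearYonedaObj A Y).ExactAt (n + 1) := by
  refine (ChainComplex.exactAt_linearYonedaObj_succ_iff A Y n).2
    fun (x : P (n + 1) ⟶ Y) hx => ?_
  have := (hS (n + 2)).epi_g
  have := (hS (n + 1)).epi_g
  have hιx : ι (n + 1) ≫ x = 0 := (cancel_epi (π (n + 2))).1 <| by
    rw [comp_zero, ← spliceComplex_d_comp]
    exact hx
  obtain ⟨g, rfl⟩ := (hS (n + 1)).exact.desc' x hιx
  obtain ⟨h, rfl⟩ := hY g
  exact ⟨h, spliceComplex_d_comp ι π w n h⟩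

theorem isZero_Ext_succ_of_shortExact
    (hS : ∀ n, (ShortComplex.mk (ι n) (π n) (w n)).ShortExact) [∀ n, Projective (P n)]
    (A : Type*) [Ring A] [Linear A C] [EnoughProjectives C] (Y : C) (n : ℕ)
    (hY : ∀ f : K (n + 1) ⟶ Y, ∃ g : P n ⟶ Y, ι n ≫ g = f) :
    IsZero (((Ext A C (n + 1)).obj (Opposite.op (K 0))).obj Y) := by
  refine IsZero.of_iso ?_ ((spliceResolution hS).isoExt (n + 1) Y)
  rw [← HomologicalComplex.exactAt_iff_isZero_homology]
  exact spliceComplex_linearYonedaObj_exactAt_succ hS A Y n hY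

end Splice

end CategoryTheory

/-- If `G` is quasi-Gorenstein projective and `Q` is quasi-projective, then
`Ext^n(G, Q) = 0` for all `n ≥ 1`. -/
theorem ext_vanishing_of_quasiGorensteinProjective
    (G Q : ModuleCat.{u} R) (hG : QuasiGorensteinProjective G)
    (hQ : QuasiProjective Q) (n : ℕ) (hn : 1 ≤ n) :
    Subsingleton (((Ext ℤ (ModuleCat.{u} R) n).obj (Opposite.op G)).obj Q) := by
  obtain ⟨K, P, ι, π, hP, hι, hπ, hexact, hlift, ⟨e⟩⟩ := hG
  obtain ⟨n, rfl⟩ := Nat.exists_eq_add_of_le' hn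
  have w (m : ℤ) : ι m ≫ π m = 0 := ModuleCat.hom_ext (hexact m).linearMap_comp_eq_zero
  have hS (m : ℕ) : (ShortComplex.mk (ι m) (π m) (w m)).ShortExact :=
    ModuleCat.shortComplex_shortExact _ (hexact m) (hι m) (hπ m)
  have (m : ℕ) : Projective (P m) := have := hP m; inferInstance
  have hExt := isZero_Ext_succ_of_shortExact (K := fun m : ℕ => K m) (P := fun m : ℕ => P m)
    hS ℤ Q n (hlift n Q hQ)
  exact ModuleCat.subsingleton_of_isZero (hExt.of_iso (((Ext ℤ _ (n + 1)).mapIso e.op).app Q).symm)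
end

section
/- The class of quasi-Gorenstein projective R-modules is projectively resolving: it contains all projective modules, and for any short exact sequence 0 → A → B → C → 0 with C quasi-Gorenstein projective, A is quasi-Gorenstein projective if and only if B is quasi-Gorenstein projective. -/
/-!
Call a short exact sequence `0 → K' → P → K → 0` with `P` projective a step if every map from
`K'` to a quasi-projective module extends to `P`. A module is quasi-Gorenstein projective iff it
lies in some class whose members are each the target of a step from a member and the source of a
step to a member; closure properties are therefore proved by coinduction, by exhibiting such a
class.

Projectives are closed under the steps `0 → P → P × P → P → 0`. For an extension
`0 → A → B → C → 0` of quasi-Gorenstein projectives, the horseshoe construction splices steps of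
`A` and `C` into a step of `B` whose other end is again such an extension. In the cosyzygy
direction this needs a map `B → P_A` extending `A → P_A`; it exists because a step onto `C`
forces `Ext¹(C, Q) = 0` for every quasi-projective `Q`, in particular for the projective
`Q = P_A`. For kernels, pulling the sequence back along a step `0 → C' → P → C → 0` gives
`0 → C' → P × A → B → 0`, so `P × A` is quasi-Gorenstein projective. The kernel of
`P₀ → P × A → A` is then an extension of `P` by a syzygy of `P × A`, and the cokernel of
`A → P × A → P₋₁` an extension of a cosyzygy of `P × A` by `P`: these are the two steps of `A`.
-/

open CategoryTheory

universe u
variable {R : Type u} [Ring R]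

section LinearAlgebra

variable {M N P Q : Type*} [AddCommGroup M] [AddCommGroup N] [AddCommGroup P] [AddCommGroup Q]
  [Module R M] [Module R N] [Module R P] [Module R Q] {f : M →ₗ[R] N} {g : N →ₗ[R] P}

theorem Function.Exact.exists_comp_eq_of_surjective (h : Function.Exact f g)
    (hg : Function.Surjective g) (v : N →ₗ[R] Q) (hv : v ∘ₗ f = 0) :
    ∃ w : P →ₗ[R] Q, w ∘ₗ g = v :=
  ⟨(LinearMap.range f).liftQ v (LinearMap.range_le_ker_iff.mpr hv) ∘ₗ
    (h.linearEquivOfSurjective hg).symm.toLinearMap, by ext x; simp⟩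

theorem Function.Exact.exists_comp_eq_of_injective (h : Function.Exact f g)
    (hf : Function.Injective f) (v : Q →ₗ[R] N) (hv : g ∘ₗ v = 0) :
    ∃ w : Q →ₗ[R] M, f ∘ₗ w = v :=
  ⟨(LinearEquiv.ofInjective f hf).symm.toLinearMap ∘ₗ
    v.codRestrict (LinearMap.range f) (fun x => (h (v x)).mp (LinearMap.congr_fun hv x)),
    by ext x; simp; rfl⟩

end LinearAlgebra

theorem QuasiProjective.of_projective {Q : ModuleCat.{u} R} [Module.Projective R Q] :
    QuasiProjective Q := fun _ g hg f => by
  obtain ⟨h, hh⟩ := Module.projective_lifting_property g.hom f.hom hg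
  exact ⟨ModuleCat.ofHom h, ModuleCat.hom_ext hh⟩

def HasQuasiProjectiveExtension {M N : Type*} [AddCommGroup M] [AddCommGroup N] [Module R M]
    [Module R N] (ι : M →ₗ[R] N) : Prop :=
  ∀ Q : ModuleCat.{u} R, QuasiProjective Q → ∀ u : M →ₗ[R] Q, ∃ v : N →ₗ[R] Q, v ∘ₗ ι = u

structure ShortExactSeq (A B C : ModuleCat.{u} R) where
  f : A →ₗ[R] B
  g : B →ₗ[R] C
  injective : Function.Injective f
  surjective : Function.Surjective g
  exact : Function.Exact f g

structure SyzygyStep (K' K : ModuleCat.{u} R) where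
  P : ModuleCat.{u} R
  projective : Module.Projective R P
  ι : K' →ₗ[R] P
  π : P →ₗ[R] K
  injective : Function.Injective ι
  surjective : Function.Surjective π
  exact : Function.Exact ι π
  extension : HasQuasiProjectiveExtension ι

def SyzygyStep.toShortExactSeq {K' K : ModuleCat.{u} R} (t : SyzygyStep K' K) :
    ShortExactSeq K' t.P K :=
  ⟨t.ι, t.π, t.injective, t.surjective, t.exact⟩

namespace ShortExactSeq

variable {A B C X P : ModuleCat.{u} R}

theorem exists_hom_of_projective (s : ShortExactSeq A B C) (t : ShortExactSeq X P C)
    [Module.Projective R P] :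
    ∃ (φ : P →ₗ[R] B) (ψ : X →ₗ[R] A), s.g ∘ₗ φ = t.g ∧ s.f ∘ₗ ψ = φ ∘ₗ t.f := by
  obtain ⟨φ, hφ⟩ := Module.projective_lifting_property s.g t.g s.surjective
  obtain ⟨ψ, hψ⟩ := s.exact.exists_comp_eq_of_injective s.injective (φ ∘ₗ t.f) <| by
    rw [← LinearMap.comp_assoc, hφ, t.exact.linearMap_comp_eq_zero]
  exact ⟨φ, ψ, hφ, hψ⟩

/-- The pullback of `s` along `t.g`, split by `φ`. -/
def prodOfHom (s : ShortExactSeq A B C) (t : ShortExactSeq X P C) (φ : P →ₗ[R] B)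
    (ψ : X →ₗ[R] A) (hφ : s.g ∘ₗ φ = t.g) (hψ : s.f ∘ₗ ψ = φ ∘ₗ t.f) :
    ShortExactSeq X (ModuleCat.of R (P × A)) B where
  f := LinearMap.prod t.f (-ψ)
  g := LinearMap.coprod φ s.f
  injective _ _ h := t.injective (congrArg Prod.fst h)
  surjective b := by
    obtain ⟨p, hp⟩ := t.surjective (s.g b)
    obtain ⟨a, ha⟩ := (s.exact (b - φ p)).mp <| by
      rw [map_sub, ← LinearMap.comp_apply, hφ, hp, sub_self]
    exact ⟨(p, a), by simp [ha]⟩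
  exact := by
    rintro ⟨p, a⟩
    have hψ' (x : X) : s.f (ψ x) = φ (t.f x) := LinearMap.congr_fun hψ x
    refine ⟨fun h => ?_, ?_⟩
    · have h' : φ p + s.f a = 0 := h
      obtain ⟨x, rfl⟩ := (t.exact p).mp <| by
        have := congrArg s.g h'
        rwa [map_add, s.exact.apply_apply_eq_zero, add_zero, map_zero, ← LinearMap.comp_apply,
          hφ] at this
      refine ⟨x, Prod.ext rfl (s.injective ?_)⟩
      simp [hψ', eq_neg_of_add_eq_zero_right h']
    · rintro ⟨x, hx⟩
      rw [← hx]
      simp [hψ']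

end ShortExactSeq

theorem SyzygyStep.hasQuasiProjectiveExtension {X A B C : ModuleCat.{u} R}
    (t : SyzygyStep X C) (s : ShortExactSeq A B C) : HasQuasiProjectiveExtension s.f := by
  have := t.projective
  obtain ⟨φ, ψ, hφ, hψ⟩ := s.exists_hom_of_projective t.toShortExactSeq
  let s' := s.prodOfHom t.toShortExactSeq φ ψ hφ hψ
  intro Q hQ u
  obtain ⟨v, hv⟩ := t.extension Q hQ (u ∘ₗ ψ)
  obtain ⟨w, hw⟩ := s'.exact.exists_comp_eq_of_surjective s'.surjective (v.coprod u) <| by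
    ext x
    simpa [s', ShortExactSeq.prodOfHom, SyzygyStep.toShortExactSeq, ← sub_eq_add_neg,
      sub_eq_zero] using LinearMap.congr_fun hv x
  refine ⟨w, ?_⟩
  calc w ∘ₗ s.f = w ∘ₗ s'.g ∘ₗ LinearMap.inr R t.P A := by
        rw [← LinearMap.coprod_inr φ s.f]; rfl
    _ = u := by rw [← LinearMap.comp_assoc, hw, LinearMap.coprod_inr]

theorem HasQuasiProjectiveExtension.of_horseshoe {A B C : ModuleCat.{u} R} {PA PC : Type*}
    [AddCommGroup PA] [Module R PA] [AddCommGroup PC] [Module R PC] (s : ShortExactSeq A B C)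
    {ιA : A →ₗ[R] PA} {ιC : C →ₗ[R] PC} {ιB : B →ₗ[R] PA × PC}
    (hA : HasQuasiProjectiveExtension ιA) (hC : HasQuasiProjectiveExtension ιC)
    (hf : ιB ∘ₗ s.f = LinearMap.inl R PA PC ∘ₗ ιA)
    (hg : LinearMap.snd R PA PC ∘ₗ ιB = ιC ∘ₗ s.g) :
    HasQuasiProjectiveExtension ιB := by
  intro Q hQ u
  obtain ⟨vA, hvA⟩ := hA Q hQ (u ∘ₗ s.f)
  obtain ⟨w, hw⟩ := s.exact.exists_comp_eq_of_surjective s.surjective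
      (u - vA ∘ₗ LinearMap.fst R PA PC ∘ₗ ιB) <| by
    ext a
    simpa [sub_eq_zero] using (LinearMap.congr_fun hvA a).symm.trans
      (congrArg (vA ∘ LinearMap.fst R PA PC) (LinearMap.congr_fun hf a)).symm
  obtain ⟨vC, hvC⟩ := hC Q hQ w
  refine ⟨vA.coprod vC, LinearMap.ext fun b => ?_⟩
  have h₁ : (ιB b).2 = ιC (s.g b) := LinearMap.congr_fun hg b
  simp [h₁, ← LinearMap.comp_apply vC, hvC, ← LinearMap.comp_apply w, hw]

namespace ShortExactSeq

variable {A B C A' C' A'' C'' : ModuleCat.{u} R}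

theorem exists_shortExactSeq_ker (s : ShortExactSeq A B C) (tA : SyzygyStep A' A)
    (tC : SyzygyStep C' C) {φ : tC.P →ₗ[R] B} (hφ : ∀ q, s.g (φ q) = tC.π q) :
    ∃ s' : ShortExactSeq A' (ModuleCat.of R (LinearMap.ker ((s.f ∘ₗ tA.π).coprod φ))) C',
      (LinearMap.ker _).subtype ∘ₗ s'.f = LinearMap.inl R _ _ ∘ₗ tA.ι ∧
      LinearMap.snd R _ _ ∘ₗ (LinearMap.ker _).subtype = tC.ι ∘ₗ s'.g := by
  let K := LinearMap.ker ((s.f ∘ₗ tA.π).coprod φ)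
  have hK (z : tA.P × tC.P) : z ∈ K ↔ s.f (tA.π z.1) + φ z.2 = 0 := Iff.rfl
  obtain ⟨b', hb'⟩ := tC.exact.exists_comp_eq_of_injective tC.injective
    (LinearMap.snd R _ _ ∘ₗ K.subtype) <| LinearMap.ext fun z => by
      simpa [s.exact.apply_apply_eq_zero, hφ] using congrArg s.g ((hK z).mp z.2)
  have hb'' (z : K) : tC.ι (b' z) = (z : tA.P × tC.P).2 := LinearMap.congr_fun hb' z
  let a' : A' →ₗ[R] K := (LinearMap.inl R _ _ ∘ₗ tA.ι).codRestrict K fun x => by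
    simp [hK, tA.exact.apply_apply_eq_zero]
  refine ⟨⟨a', b', fun x y h => tA.injective (congrArg (fun z : K => (z : tA.P × tC.P).1) h),
    fun c => ?_, ?_⟩, rfl, LinearMap.ext fun z => (hb'' z).symm⟩
  · obtain ⟨a, ha⟩ := (s.exact (φ (tC.ι c))).mp (by rw [hφ, tC.exact.apply_apply_eq_zero])
    obtain ⟨p, rfl⟩ := tA.surjective a
    exact ⟨⟨(-p, tC.ι c), by simp [ha]⟩, tC.injective (hb'' _)⟩
  rintro ⟨⟨p, q⟩, hz⟩
  constructor
  · intro h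
    have hq : q = 0 := by simpa [h] using (hb'' ⟨(p, q), hz⟩).symm
    obtain ⟨x, hx⟩ := (tA.exact p).mp <| s.injective <| by simpa [hK, hq] using hz
    exact ⟨x, Subtype.ext (Prod.ext hx hq.symm)⟩
  · rintro ⟨x, hx⟩
    apply tC.injective
    rw [hb'', ← hx, map_zero]
    rfl

theorem exists_syzygyStep (s : ShortExactSeq A B C) (tA : SyzygyStep A' A)
    (tC : SyzygyStep C' C) :
    ∃ B', Nonempty (ShortExactSeq A' B' C') ∧ Nonempty (SyzygyStep B' B) := by
  have := tA.projective
  have := tC.projective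
  obtain ⟨φ, hφ⟩ := Module.projective_lifting_property s.g tC.π s.surjective
  have hφ' (q : tC.P) : s.g (φ q) = tC.π q := LinearMap.congr_fun hφ q
  obtain ⟨s', hf, hg⟩ := s.exists_shortExactSeq_ker tA tC hφ'
  refine ⟨_, ⟨s'⟩, ⟨⟨ModuleCat.of R (tA.P × tC.P), inferInstance, _, _, Subtype.val_injective,
    fun b => ?_, LinearMap.exact_subtype_ker_map _,
    .of_horseshoe s' tA.extension tC.extension hf hg⟩⟩⟩
  obtain ⟨q, hq⟩ := tC.surjective (s.g b)
  obtain ⟨a, ha⟩ := (s.exact (b - φ q)).mp (by rw [map_sub, hφ', hq, sub_self])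
  obtain ⟨p, rfl⟩ := tA.surjective a
  exact ⟨(p, q), by simp [ha]⟩

theorem injective_prod (s : ShortExactSeq A B C) (tA : SyzygyStep A A'')
    (tC : SyzygyStep C C'') {e : B →ₗ[R] tA.P} (he : ∀ a, e (s.f a) = tA.ι a) :
    Function.Injective (e.prod (tC.ι ∘ₗ s.g)) := by
  refine (injective_iff_map_eq_zero _).mpr fun b hb => ?_
  obtain ⟨a, rfl⟩ := (s.exact b).mp (tC.injective (by simpa using congrArg Prod.snd hb))
  have ha : tA.ι a = tA.ι 0 := by simpa [he] using congrArg Prod.fst hb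
  rw [tA.injective ha, map_zero]

theorem nonempty_shortExactSeq_coker (s : ShortExactSeq A B C) (tA : SyzygyStep A A'')
    (tC : SyzygyStep C C'') {e : B →ₗ[R] tA.P} (he : ∀ a, e (s.f a) = tA.ι a) :
    Nonempty (ShortExactSeq A''
      (ModuleCat.of R ((tA.P × tC.P) ⧸ LinearMap.range (e.prod (tC.ι ∘ₗ s.g)))) C'') := by
  let L := LinearMap.range (e.prod (tC.ι ∘ₗ s.g))
  obtain ⟨a'', ha''⟩ := tA.exact.exists_comp_eq_of_surjective tA.surjective
    (L.mkQ ∘ₗ LinearMap.inl R _ _) <| LinearMap.ext fun a => by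
      refine (Submodule.Quotient.mk_eq_zero L).mpr ⟨s.f a, ?_⟩
      simp [he, s.exact.apply_apply_eq_zero]
  have ha''' (p : tA.P) : a'' (tA.π p) = L.mkQ (p, 0) := LinearMap.congr_fun ha'' p
  let b'' : ((tA.P × tC.P) ⧸ L) →ₗ[R] C'' := L.liftQ (tC.π ∘ₗ LinearMap.snd R _ _) <| by
    rintro _ ⟨b, rfl⟩
    simp [tC.exact.apply_apply_eq_zero]
  refine ⟨⟨a'', b'', (injective_iff_map_eq_zero a'').mpr fun x hx => ?_, fun c => ?_, ?_⟩⟩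
  · obtain ⟨p, rfl⟩ := tA.surjective x
    obtain ⟨b, hb⟩ := (Submodule.Quotient.mk_eq_zero L).mp ((ha''' p).symm.trans hx)
    obtain ⟨a, rfl⟩ := (s.exact b).mp (tC.injective (by simpa using congrArg Prod.snd hb))
    have hp : tA.ι a = p := by simpa [he] using congrArg Prod.fst hb
    rw [← hp, tA.exact.apply_apply_eq_zero]
  · obtain ⟨q, rfl⟩ := tC.surjective c
    exact ⟨L.mkQ (0, q), rfl⟩
  intro z
  obtain ⟨⟨p, q⟩, rfl⟩ := L.mkQ_surjective z
  constructor
  · intro h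
    obtain ⟨c, hc⟩ := (tC.exact q).mp h
    obtain ⟨b, rfl⟩ := s.surjective c
    refine ⟨tA.π (p - e b), ?_⟩
    rw [ha''', Submodule.mkQ_apply, Submodule.mkQ_apply, Submodule.Quotient.eq]
    exact ⟨-b, by simp [hc]⟩
  · rintro ⟨x, hx⟩
    obtain ⟨p', rfl⟩ := tA.surjective x
    rw [← hx, ha''']
    simp [b'']

theorem exists_cosyzygyStep (s : ShortExactSeq A B C) (hs : HasQuasiProjectiveExtension s.f)
    (tA : SyzygyStep A A'') (tC : SyzygyStep C C'') :
    ∃ B'', Nonempty (ShortExactSeq A'' B'' C'') ∧ Nonempty (SyzygyStep B B'') := by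
  have := tA.projective
  have := tC.projective
  obtain ⟨e, he⟩ := hs tA.P QuasiProjective.of_projective tA.ι
  have he' (a : A) : e (s.f a) = tA.ι a := LinearMap.congr_fun he a
  have hf : e.prod (tC.ι ∘ₗ s.g) ∘ₗ s.f = LinearMap.inl R _ _ ∘ₗ tA.ι := by
    ext a <;> simp [he', s.exact.apply_apply_eq_zero]
  exact ⟨_, s.nonempty_shortExactSeq_coker tA tC he',
    ⟨⟨ModuleCat.of R (tA.P × tC.P), inferInstance, _, _, s.injective_prod tA tC he',
      Submodule.mkQ_surjective _, LinearMap.exact_map_mkQ_range _,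
      .of_horseshoe s tA.extension tC.extension hf rfl⟩⟩⟩

end ShortExactSeq

namespace SyzygyStep

variable {K' K N : ModuleCat.{u} R}

def congrLeft (e : N ≅ K') (t : SyzygyStep K' K) : SyzygyStep N K where
  P := t.P
  projective := t.projective
  ι := t.ι ∘ₗ e.toLinearEquiv.toLinearMap
  π := t.π
  injective := t.injective.comp e.toLinearEquiv.injective
  surjective := t.surjective
  exact := LinearEquiv.precomp_exact_iff_exact.mpr t.exact
  extension Q hQ u := by
    obtain ⟨v, hv⟩ := t.extension Q hQ (u ∘ₗ e.toLinearEquiv.symm.toLinearMap)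
    exact ⟨v, by ext x; simpa using LinearMap.congr_fun hv (e.toLinearEquiv x)⟩

def congrRight (t : SyzygyStep K' K) (e : K ≅ N) : SyzygyStep K' N where
  P := t.P
  projective := t.projective
  ι := t.ι
  π := e.toLinearEquiv.toLinearMap ∘ₗ t.π
  injective := t.injective
  surjective := e.toLinearEquiv.surjective.comp t.surjective
  exact := LinearEquiv.postcomp_exact_iff_exact.mpr t.exact
  extension := t.extension

def ofProjective (P : ModuleCat.{u} R) [Module.Projective R P] : SyzygyStep P P where
  P := ModuleCat.of R (P × P)
  projective := inferInstance
  ι := LinearMap.inl R P P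
  π := LinearMap.snd R P P
  injective := LinearMap.inl_injective
  surjective := LinearMap.snd_surjective
  exact := Function.Exact.inl_snd
  extension _ _ u := ⟨u ∘ₗ LinearMap.fst R P P, by ext; simp⟩

end SyzygyStep

theorem quasiGorensteinProjective_iff {M : ModuleCat.{u} R} :
    QuasiGorensteinProjective M ↔ ∃ K : ℤ → ModuleCat.{u} R,
      Nonempty (∀ n, SyzygyStep (K (n + 1)) (K n)) ∧ Nonempty (M ≅ K 0) := by
  constructor
  · rintro ⟨K, P, ι, π, hP, hι, hπ, hex, hext, e⟩
    refine ⟨K, ⟨fun n => ⟨P n, hP n, (ι n).hom, (π n).hom, hι n, hπ n, hex n,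
      fun Q hQ u => ?_⟩⟩, e⟩
    obtain ⟨v, hv⟩ := hext n Q hQ (ModuleCat.ofHom u)
    exact ⟨v.hom, congrArg ModuleCat.Hom.hom hv⟩
  · rintro ⟨K, ⟨t⟩, e⟩
    refine ⟨K, fun n => (t n).P, fun n => ModuleCat.ofHom (t n).ι,
      fun n => ModuleCat.ofHom (t n).π, fun n => (t n).projective, fun n => (t n).injective,
      fun n => (t n).surjective, fun n => (t n).exact, fun n Q hQ u => ?_, e⟩
    obtain ⟨v, hv⟩ := (t n).extension Q hQ u.hom
    exact ⟨ModuleCat.ofHom v, ModuleCat.hom_ext hv⟩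

def StepClosed (S : ModuleCat.{u} R → Prop) : Prop :=
  ∀ M, S M → (∃ Y, S Y ∧ Nonempty (SyzygyStep Y M)) ∧ ∃ X, S X ∧ Nonempty (SyzygyStep M X)

theorem StepClosed.quasiGorensteinProjective {S : ModuleCat.{u} R → Prop} (hS : StepClosed S)
    {M : ModuleCat.{u} R} (hM : S M) : QuasiGorensteinProjective M := by
  choose Y hYS hY using fun N hN => (hS N hN).1
  choose X hXS hX using fun N hN => (hS N hN).2
  let down (n : ℕ) : {N // S N} := n.rec ⟨M, hM⟩ fun _ N => ⟨Y N.1 N.2, hYS N.1 N.2⟩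
  let up (n : ℕ) : {N // S N} := n.rec ⟨M, hM⟩ fun _ N => ⟨X N.1 N.2, hXS N.1 N.2⟩
  let K : ℤ → ModuleCat.{u} R
    | .ofNat n => (down n).1
    | .negSucc n => (up (n + 1)).1
  refine quasiGorensteinProjective_iff.mpr ⟨K, ⟨fun
    | .ofNat n => (hY _ (down n).2).some
    | .negSucc 0 => (hX M hM).some
    | .negSucc (n + 1) => (hX _ (up (n + 1)).2).some⟩, ⟨Iso.refl M⟩⟩

theorem stepClosed_isoTerms (K : ℤ → ModuleCat.{u} R)
    (t : ∀ n, SyzygyStep (K (n + 1)) (K n)) : StepClosed fun N => ∃ m, Nonempty (N ≅ K m) := by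
  rintro N ⟨m, ⟨e⟩⟩
  exact ⟨⟨K (m + 1), ⟨m + 1, ⟨Iso.refl _⟩⟩, ⟨(t m).congrRight e.symm⟩⟩,
    ⟨K (m - 1), ⟨m - 1, ⟨Iso.refl _⟩⟩,
      ⟨(t (m - 1)).congrLeft (e ≪≫ eqToIso (by rw [sub_add_cancel]))⟩⟩⟩

theorem stepClosed_quasiGorensteinProjective :
    StepClosed (QuasiGorensteinProjective (R := R)) := by
  intro M hM
  obtain ⟨K, ⟨t⟩, ⟨e⟩⟩ := quasiGorensteinProjective_iff.mp hM
  have hK := stepClosed_isoTerms K t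
  obtain ⟨⟨Y, hY, sY⟩, ⟨X, hX, sX⟩⟩ := hK M ⟨0, ⟨e⟩⟩
  exact ⟨⟨Y, hK.quasiGorensteinProjective hY, sY⟩, ⟨X, hK.quasiGorensteinProjective hX, sX⟩⟩

namespace QuasiGorensteinProjective

variable {Y M X : ModuleCat.{u} R}

theorem of_syzygySteps (hY : QuasiGorensteinProjective Y) (hX : QuasiGorensteinProjective X)
    (s : SyzygyStep Y M) (t : SyzygyStep M X) : QuasiGorensteinProjective M := by
  refine StepClosed.quasiGorensteinProjective (S := fun N => QuasiGorensteinProjective N ∨ N = M)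
    ?_ (.inr rfl)
  rintro N (hN | rfl)
  · obtain ⟨⟨Y', hY', s'⟩, ⟨X', hX', t'⟩⟩ := stepClosed_quasiGorensteinProjective N hN
    exact ⟨⟨Y', .inl hY', s'⟩, ⟨X', .inl hX', t'⟩⟩
  · exact ⟨⟨Y, .inl hY, ⟨s⟩⟩, ⟨X, .inl hX, ⟨t⟩⟩⟩

theorem of_projective (P : ModuleCat.{u} R) [Module.Projective R P] :
    QuasiGorensteinProjective P :=
  StepClosed.quasiGorensteinProjective (S := fun N => Module.Projective R N)
    (fun N _ => ⟨⟨N, ‹_›, ⟨.ofProjective N⟩⟩, ⟨N, ‹_›, ⟨.ofProjective N⟩⟩⟩) ‹_›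

end QuasiGorensteinProjective

theorem ShortExactSeq.quasiGorensteinProjective_mid {A B C : ModuleCat.{u} R}
    (s : ShortExactSeq A B C) (hA : QuasiGorensteinProjective A)
    (hC : QuasiGorensteinProjective C) : QuasiGorensteinProjective B := by
  refine StepClosed.quasiGorensteinProjective (S := fun B => ∃ A C,
    QuasiGorensteinProjective A ∧ QuasiGorensteinProjective C ∧
      Nonempty (ShortExactSeq A B C)) ?_ ⟨A, C, hA, hC, ⟨s⟩⟩
  rintro B ⟨A, C, hA, hC, ⟨s⟩⟩
  obtain ⟨⟨A', hA', ⟨tA⟩⟩, ⟨A'', hA'', ⟨tA'⟩⟩⟩ := stepClosed_quasiGorensteinProjective A hA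
  obtain ⟨⟨C', hC', ⟨tC⟩⟩, ⟨C'', hC'', ⟨tC'⟩⟩⟩ := stepClosed_quasiGorensteinProjective C hC
  obtain ⟨B', s', t'⟩ := s.exists_syzygyStep tA tC
  obtain ⟨B'', s'', t''⟩ := s.exists_cosyzygyStep (tC.hasQuasiProjectiveExtension s) tA' tC'
  exact ⟨⟨B', ⟨A', C', hA', hC', s'⟩, t'⟩, ⟨B'', ⟨A'', C'', hA'', hC'', s''⟩, t''⟩⟩

namespace SyzygyStep

variable {P A Y X : ModuleCat.{u} R} [Module.Projective R P]

theorem exists_syzygyStep_of_prod (t : SyzygyStep Y (ModuleCat.of R (P × A)))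
    (hY : QuasiGorensteinProjective Y) :
    ∃ K, QuasiGorensteinProjective K ∧ Nonempty (SyzygyStep K A) := by
  let K := LinearMap.ker (LinearMap.snd R P A ∘ₗ t.π)
  have hι (y : Y) : t.ι y ∈ K := by simp [K, t.exact.apply_apply_eq_zero]
  let s : ShortExactSeq Y (ModuleCat.of R K) P :=
    { f := t.ι.codRestrict K hι
      g := LinearMap.fst R P A ∘ₗ t.π ∘ₗ K.subtype
      injective := fun x y h => t.injective (congrArg Subtype.val h)
      surjective := fun p => by
        obtain ⟨x, hx⟩ := t.surjective (p, 0)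
        exact ⟨⟨x, by simp [K, hx]⟩, by simp [hx]⟩
      exact := by
        rintro ⟨z, hz⟩
        refine ⟨fun h => ?_, ?_⟩
        · obtain ⟨y, hy⟩ := (t.exact z).mp (Prod.ext h hz)
          exact ⟨y, Subtype.ext hy⟩
        · rintro ⟨y, hy⟩
          rw [← hy]
          simp [t.exact.apply_apply_eq_zero] }
  refine ⟨ModuleCat.of R K, s.quasiGorensteinProjective_mid hY (.of_projective P),
    ⟨⟨t.P, t.projective, K.subtype, LinearMap.snd R P A ∘ₗ t.π, Subtype.val_injective,
      fun a => ?_, LinearMap.exact_subtype_ker_map _, fun Q hQ u => ?_⟩⟩⟩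
  · obtain ⟨x, hx⟩ := t.surjective (0, a)
    exact ⟨x, by simp [hx]⟩
  obtain ⟨v, hv⟩ := t.extension Q hQ (u ∘ₗ s.f)
  obtain ⟨w, hw⟩ :=
      s.exact.exists_comp_eq_of_surjective s.surjective (u - v ∘ₗ K.subtype) <| by
    ext y
    exact sub_eq_zero.mpr (LinearMap.congr_fun hv y).symm
  refine ⟨v + w ∘ₗ LinearMap.fst R P A ∘ₗ t.π, LinearMap.ext fun z => ?_⟩
  have hz : w (s.g z) = u z - v z := LinearMap.congr_fun hw z
  show v z + w (s.g z) = u z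
  rw [hz, add_sub_cancel]

theorem exists_cosyzygyStep_of_prod (t : SyzygyStep (ModuleCat.of R (P × A)) X)
    (hX : QuasiGorensteinProjective X) :
    ∃ X', QuasiGorensteinProjective X' ∧ Nonempty (SyzygyStep A X') := by
  let j := t.ι ∘ₗ LinearMap.inr R P A
  let L := LinearMap.range j
  have hL : L ≤ LinearMap.ker t.π := by
    rintro _ ⟨a, rfl⟩
    exact t.exact.apply_apply_eq_zero _
  let s : ShortExactSeq P (ModuleCat.of R (t.P ⧸ L)) X :=
    { f := L.mkQ ∘ₗ t.ι ∘ₗ LinearMap.inl R P A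
      g := L.liftQ t.π hL
      injective := by
        refine (injective_iff_map_eq_zero _).mpr fun p hp => ?_
        obtain ⟨a, ha⟩ := (Submodule.Quotient.mk_eq_zero L).mp hp
        exact (congrArg Prod.fst (t.injective ha)).symm
      surjective := fun x => by
        obtain ⟨y, rfl⟩ := t.surjective x
        exact ⟨L.mkQ y, rfl⟩
      exact := by
        intro z
        obtain ⟨y, rfl⟩ := L.mkQ_surjective z
        refine ⟨fun h => ?_, ?_⟩
        · obtain ⟨⟨p, a⟩, rfl⟩ := (t.exact y).mp h
          refine ⟨p, (Submodule.Quotient.eq L).mpr ⟨-a, ?_⟩⟩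
          simp only [j, LinearMap.comp_apply, LinearMap.inr_apply, ← map_sub]
          simp
        · rintro ⟨p, hp⟩
          rw [← hp]
          simp [t.exact.apply_apply_eq_zero] }
  refine ⟨ModuleCat.of R (t.P ⧸ L), s.quasiGorensteinProjective_mid (.of_projective P) hX,
    ⟨⟨t.P, t.projective, j, L.mkQ, t.injective.comp LinearMap.inr_injective, L.mkQ_surjective,
      LinearMap.exact_map_mkQ_range j, fun Q hQ u => ?_⟩⟩⟩
  obtain ⟨v, hv⟩ := t.extension Q hQ (u ∘ₗ LinearMap.snd R P A)
  exact ⟨v, by rw [← LinearMap.comp_assoc, hv]; rfl⟩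

end SyzygyStep

theorem QuasiGorensteinProjective.of_prod {P A : ModuleCat.{u} R} [Module.Projective R P]
    (h : QuasiGorensteinProjective (ModuleCat.of R (P × A))) : QuasiGorensteinProjective A := by
  obtain ⟨⟨Y, hY, ⟨t⟩⟩, ⟨X, hX, ⟨t'⟩⟩⟩ := stepClosed_quasiGorensteinProjective _ h
  obtain ⟨K, hK, ⟨s⟩⟩ := t.exists_syzygyStep_of_prod hY
  obtain ⟨X', hX', ⟨s'⟩⟩ := t'.exists_cosyzygyStep_of_prod hX
  exact .of_syzygySteps hK hX' s s'

theorem ShortExactSeq.quasiGorensteinProjective_left {A B C : ModuleCat.{u} R}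
    (s : ShortExactSeq A B C) (hB : QuasiGorensteinProjective B)
    (hC : QuasiGorensteinProjective C) : QuasiGorensteinProjective A := by
  obtain ⟨⟨C', hC', ⟨t⟩⟩, -⟩ := stepClosed_quasiGorensteinProjective C hC
  have := t.projective
  obtain ⟨φ, ψ, hφ, hψ⟩ := s.exists_hom_of_projective t.toShortExactSeq
  exact ((s.prodOfHom t.toShortExactSeq φ ψ hφ hψ).quasiGorensteinProjective_mid hC' hB).of_prod

/-- The class of quasi-Gorenstein projective modules is projectively resolving:
it contains all projectives, and for any short exact sequence `0 → A → B → C → 0`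
with `C` quasi-Gorenstein projective, `A` is quasi-Gorenstein projective iff `B` is. -/
theorem quasiGorensteinProjective_projectively_resolving :
    (∀ P : ModuleCat.{u} R, Module.Projective R P → QuasiGorensteinProjective P) ∧
    (∀ (A B C : ModuleCat.{u} R) (f : A ⟶ B) (g : B ⟶ C),
      Function.Injective f → Function.Surjective g → Function.Exact f g →
      QuasiGorensteinProjective C →
      (QuasiGorensteinProjective A ↔ QuasiGorensteinProjective B)) := by
  refine ⟨fun P _ => .of_projective P, fun A B C f g hf hg hfg hC => ?_⟩
  let s : ShortExactSeq A B C := ⟨f.hom, g.hom, hf, hg, hfg⟩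
  exact ⟨fun hA => s.quasiGorensteinProjective_mid hA hC,
    fun hB => s.quasiGorensteinProjective_left hB hC⟩
end

section
/- If M is a quasi-projective R-module, then for every short exact sequence 0 → A → M → B → 0 with A and B quasi-Gorenstein projective, the sequence 0 → Hom(B, M) → Hom(M, M) → Hom(A, M) → 0 is exact; that is, M is quasi-injective relative to the exact structure on the subcategory of quasi-Gorenstein projective modules. -/
open CategoryTheory

universe u
variable {R : Type u} [Ring R]

/-!
`Hom(-, M)` is left exact on `0 → A → M → B → 0`, so the point is that `Hom(M, M) → Hom(A, M)`
is onto, i.e. `Ext¹(B, M) = 0`. Take `0 → K → P → B → 0` from the complete resolution of `B` and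
lift `P → B` to `t : P → M`; it restricts to `u : K → A`, and then `M` is the pushout of
`A ← K → P`. For `α : A → M`, the map `α ∘ u` extends along `K → P` because `M` is
quasi-projective, and `α` together with that extension induces an endomorphism of `M` restricting
to `α`.
-/

namespace LinearMap

variable {A M B K P : Type*} [AddCommGroup A] [AddCommGroup M] [AddCommGroup B]
  [AddCommGroup K] [AddCommGroup P] [Module R A] [Module R M] [Module R B] [Module R K]
  [Module R P] {f : A →ₗ[R] M} {g : M →ₗ[R] B} {ι : K →ₗ[R] P} {π : P →ₗ[R] B}
  {t : P →ₗ[R] M} {u : K →ₗ[R] A}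

theorem surjective_coprod_of_exact (hfg : Function.Exact f g) (hπ : Function.Surjective π)
    (ht : g ∘ₗ t = π) : Function.Surjective (f.coprod t) := by
  intro m
  obtain ⟨p, hp⟩ := hπ (g m)
  obtain ⟨a, ha⟩ := (hfg (m - t p)).mp <| by
    rw [map_sub, ← comp_apply, ht, hp, sub_self]
  exact ⟨(a, p), by simp [ha]⟩

theorem exact_prod_neg_coprod (hf : Function.Injective f) (hfg : Function.Exact f g)
    (hιπ : Function.Exact ι π) (ht : g ∘ₗ t = π) (hu : f ∘ₗ u = t ∘ₗ ι) :
    Function.Exact ((-u).prod ι) (f.coprod t) := by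
  have hu' (k : K) : f (u k) = t (ι k) := LinearMap.congr_fun hu k
  refine fun x ↦ ⟨fun h ↦ ?_, ?_⟩
  · obtain ⟨a, p⟩ := x
    have h' : f a + t p = 0 := h
    obtain ⟨k, rfl⟩ := (hιπ p).mp <| by
      rw [← ht, comp_apply, ← neg_eq_of_add_eq_zero_right h', map_neg,
        hfg.apply_apply_eq_zero, neg_zero]
    refine ⟨k, Prod.ext (hf ?_) rfl⟩
    simp [hu', ← eq_neg_of_add_eq_zero_left h']
  · rintro ⟨k, rfl⟩
    simp [hu']

end LinearMap

namespace ModuleCat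

variable {X Y Z W : ModuleCat.{u} R}

theorem exists_comp_eq_of_exact {f : X ⟶ Y} {g : Y ⟶ Z} (hfg : Function.Exact f g)
    (hg : Function.Surjective g) {ψ : Y ⟶ W} (hψ : f ≫ ψ = 0) : ∃ φ : Z ⟶ W, g ≫ φ = ψ :=
  have : Epi g := (epi_iff_surjective g).mpr hg
  (shortComplex_exact (ShortComplex.mk f g (hom_ext hfg.linearMap_comp_eq_zero)) hfg).desc' ψ hψ

theorem exists_comp_eq_of_exact_of_injective {f : X ⟶ Y} {g : Y ⟶ Z}
    (hfg : Function.Exact f g) (hf : Function.Injective f) {h : W ⟶ Y} (hh : h ≫ g = 0) :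
    ∃ l : W ⟶ X, l ≫ f = h :=
  have : Mono f := (mono_iff_injective f).mpr hf
  (shortComplex_exact (ShortComplex.mk f g (hom_ext hfg.linearMap_comp_eq_zero)) hfg).lift' h hh

end ModuleCat

section Hom

variable {A M B X : ModuleCat.{u} R} {f : A ⟶ M} {g : M ⟶ B}

theorem precomp_injective_of_surjective (hg : Function.Surjective g) :
    Function.Injective (fun φ : B ⟶ X => g ≫ φ) :=
  have : Epi g := (ModuleCat.epi_iff_surjective g).mpr hg
  fun _ _ h ↦ (cancel_epi g).mp h

theorem exact_precomp_of_exact (hfg : Function.Exact f g) (hg : Function.Surjective g) :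
    Function.Exact (fun φ : B ⟶ X => g ≫ φ) (fun ψ : M ⟶ X => f ≫ ψ) := by
  refine fun ψ ↦ ⟨ModuleCat.exists_comp_eq_of_exact hfg hg, ?_⟩
  rintro ⟨φ, rfl⟩
  have : f ≫ g = 0 := ModuleCat.hom_ext hfg.linearMap_comp_eq_zero
  simp only [← Category.assoc, this, Limits.zero_comp]

/-- `hext` says that `Ext¹(B, X)`, computed from the projective presentation `K → P → B → 0`,
vanishes. -/
theorem surjective_precomp_of_presentation {K P : ModuleCat.{u} R} [Module.Projective R P]
    (hf : Function.Injective f) (hfg : Function.Exact f g) (hg : Function.Surjective g)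
    {ι : K ⟶ P} {π : P ⟶ B} (hιπ : Function.Exact ι π) (hπ : Function.Surjective π)
    (hext : ∀ h : K ⟶ X, ∃ v : P ⟶ X, ι ≫ v = h) :
    Function.Surjective (fun ψ : M ⟶ X => f ≫ ψ) := by
  intro α
  obtain ⟨t, ht⟩ := Module.projective_lifting_property g.hom π.hom hg
  obtain ⟨u, hu⟩ := ModuleCat.exists_comp_eq_of_exact_of_injective hfg hf
    (h := ι ≫ ModuleCat.ofHom t) <| by
      ext k
      simpa [ht] using hιπ.apply_apply_eq_zero k
  obtain ⟨v, hv⟩ := hext (u ≫ α)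
  have hv' (k : K) : v (ι k) = α (u k) := LinearMap.congr_fun (congrArg ModuleCat.Hom.hom hv) k
  have hu' : f.hom ∘ₗ u.hom = t ∘ₗ ι.hom := congrArg ModuleCat.Hom.hom hu
  obtain ⟨ψ, hψ⟩ := ModuleCat.exists_comp_eq_of_exact
    (f := ModuleCat.ofHom ((-u.hom).prod ι.hom)) (g := ModuleCat.ofHom (f.hom.coprod t))
    (LinearMap.exact_prod_neg_coprod hf hfg hιπ ht hu')
    (LinearMap.surjective_coprod_of_exact hfg hπ ht)
    (ψ := ModuleCat.ofHom (α.hom.coprod v.hom)) <| by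
      ext k
      simp [hv']
  refine ⟨ψ, ModuleCat.hom_ext (LinearMap.ext fun a ↦ ?_)⟩
  simpa using LinearMap.congr_fun (congrArg ModuleCat.Hom.hom hψ) (a, 0)

end Hom

theorem QuasiGorensteinProjective.exists_presentation {B : ModuleCat.{u} R}
    (hB : QuasiGorensteinProjective B) :
    ∃ (K P : ModuleCat.{u} R) (ι : K ⟶ P) (π : P ⟶ B), Module.Projective R P ∧
      Function.Exact ι π ∧ Function.Surjective π ∧
      ∀ Q : ModuleCat.{u} R, QuasiProjective Q → ∀ h : K ⟶ Q, ∃ v : P ⟶ Q, ι ≫ v = h := by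
  obtain ⟨K, P, ι, π, hP, -, hπ, hιπ, hext, ⟨e⟩⟩ := hB
  have he : Function.Bijective e.inv := ConcreteCategory.bijective_of_isIso e.inv
  exact ⟨K (0 + 1), P 0, ι 0, π 0 ≫ e.inv, hP 0,
    (hιπ 0).comp_injective _ he.injective (map_zero e.inv.hom), he.surjective.comp (hπ 0), hext 0⟩

theorem quasiProjective_relatively_quasiInjective_general
    (M : ModuleCat.{u} R) (hM : QuasiProjective M)
    {A B : ModuleCat.{u} R} (f : A ⟶ M) (g : M ⟶ B)
    (hf : Function.Injective f) (hg : Function.Surjective g)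
    (hfg : Function.Exact f g)
    (hB : QuasiGorensteinProjective B) :
    Function.Injective (fun φ : B ⟶ M => g ≫ φ) ∧
    Function.Exact (fun φ : B ⟶ M => g ≫ φ) (fun ψ : M ⟶ M => f ≫ ψ) ∧
    Function.Surjective (fun ψ : M ⟶ M => f ≫ ψ) := by
  obtain ⟨K, P, ι, π, _, hιπ, hπ, hext⟩ := hB.exists_presentation
  exact ⟨precomp_injective_of_surjective hg, exact_precomp_of_exact hfg hg,
    surjective_precomp_of_presentation hf hfg hg hιπ hπ (hext M hM)⟩

/-- If `M` is quasi-projective, then for every short exact sequence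
`0 → A → M → B → 0` with `A` and `B` quasi-Gorenstein projective, the sequence
`0 → Hom(B, M) → Hom(M, M) → Hom(A, M) → 0` is exact. -/
theorem quasiProjective_relatively_quasiInjective
    (M : ModuleCat.{u} R) (hM : QuasiProjective M)
    {A B : ModuleCat.{u} R} (f : A ⟶ M) (g : M ⟶ B)
    (hf : Function.Injective f) (hg : Function.Surjective g)
    (hfg : Function.Exact f g)
    (hA : QuasiGorensteinProjective A) (hB : QuasiGorensteinProjective B) :
    Function.Injective (fun φ : B ⟶ M => g ≫ φ) ∧
    Function.Exact (fun φ : B ⟶ M => g ≫ φ) (fun ψ : M ⟶ M => f ≫ ψ) ∧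
    Function.Surjective (fun ψ : M ⟶ M => f ≫ ψ) :=
  quasiProjective_relatively_quasiInjective_general M hM f g hf hg hfg hB
end

section
/- Suppose K → G₁ → G₀ → A is an exact complex of R-modules (i.e., there are short exact sequences 0 → K → G₁ → K₁ → 0 and 0 → K₁ → G₀ → A → 0) with G₀ and G₁ quasi-Gorenstein projective. Then there exists an exact complex K → P₀ → G₀' → A with P₀ projective and G₀' quasi-Gorenstein projective. -/
open CategoryTheory

universe u
variable {R : Type u} [Ring R]

/-!
Write `0 → G₁ → P₀ → G₁' → 0` with `P₀` projective and `G₁'` quasi-Gorenstein projective, and let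
`G₀'` be the pushout of `G₁ → P₀` along `G₁ → K₁ → G₀`. Then `K → P₀ → G₀' → A → 0` is exact
(split it at the image `L` of `P₀`), and `G₀'` is an extension of `G₁'` by `G₀`.

Quasi-Gorenstein projectives are closed under extensions: they form the largest class `S` of
modules each of which is, through sequences of the defining kind, both a quotient of a projective
by a member of `S` and a submodule of a projective with quotient in `S`. Extensions of
quasi-Gorenstein projectives form such a class by the horseshoe lemma, applied to syzygies and to
cosyzygies. The cosyzygy case needs `Ext¹(M'', Q) = 0` for `M''` quasi-Gorenstein projective and
`Q` quasi-projective, which holds because `M''` has such a syzygy.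
-/

namespace ModuleCat

variable {A B C D : ModuleCat.{u} R}

theorem exists_desc_of_surjective {q : B ⟶ C} (hq : Function.Surjective q) (h : B ⟶ D)
    (hh : ∀ b, q b = 0 → h b = 0) : ∃ l : C ⟶ D, ∀ b, l (q b) = h b := by
  have : Epi q := (ModuleCat.epi_iff_surjective q).2 hq
  let S := ShortComplex.mk (ModuleCat.ofHom (LinearMap.ker q.hom).subtype) q
    (by ext ⟨b, hb⟩; exact hb)
  obtain ⟨l, hl⟩ := (ModuleCat.shortComplex_exact S (LinearMap.exact_subtype_ker_map q.hom)).desc'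
    h (by ext ⟨b, hb⟩; exact hh b hb)
  exact ⟨l, fun b => congr($hl b)⟩

theorem exists_lift_of_exact {i : A ⟶ B} {q : B ⟶ C} (hiq : Function.Exact i q)
    (hi : Function.Injective i) (h : D ⟶ B) (hh : ∀ d, q (h d) = 0) :
    ∃ l : D ⟶ A, ∀ d, i (l d) = h d := by
  have : Mono i := (ModuleCat.mono_iff_injective i).2 hi
  obtain ⟨l, hl⟩ := (ModuleCat.shortComplex_exact (ShortComplex.mk i q
    (by ext a; exact hiq.apply_apply_eq_zero a)) hiq).lift' h (by ext d; exact hh d)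
  exact ⟨l, fun d => congr($hl d)⟩

theorem exists_factor_range_of_exact {K P G A : ModuleCat.{u} R} {a : K ⟶ P}
    {φ : P ⟶ G} {d : G ⟶ A} (haφ : Function.Exact a φ) (hφd : Function.Exact φ d) :
    ∃ (L : ModuleCat.{u} R) (b : P ⟶ L) (c : L ⟶ G), Function.Surjective b ∧
      Function.Exact a b ∧ Function.Injective c ∧ Function.Exact c d := by
  refine ⟨ModuleCat.of R (LinearMap.range φ.hom), ModuleCat.ofHom φ.hom.rangeRestrict,
    ModuleCat.ofHom (LinearMap.range φ.hom).subtype, LinearMap.surjective_rangeRestrict _,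
    fun p => ?_, Subtype.val_injective, fun g => ?_⟩
  · rw [← haφ p]
    exact Subtype.ext_iff
  · rw [hφd g]
    exact ⟨fun ⟨p, hp⟩ => ⟨⟨g, p, hp⟩, rfl⟩, fun ⟨⟨_, p, hp⟩, rfl⟩ => ⟨p, hp⟩⟩

end ModuleCat

namespace LinearMap

variable {X Y Z C : Type*} [AddCommGroup X] [AddCommGroup Y] [AddCommGroup Z] [AddCommGroup C]
  [Module R X] [Module R Y] [Module R Z] [Module R C] (f : X →ₗ[R] Y) (g : X →ₗ[R] Z)

abbrev Pushout : Type _ := (Y × Z) ⧸ range (f.prod (-g))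

def pushoutInl : Y →ₗ[R] Pushout f g := (range (f.prod (-g))).mkQ ∘ₗ inl R Y Z

def pushoutInr : Z →ₗ[R] Pushout f g := (range (f.prod (-g))).mkQ ∘ₗ inr R Y Z

variable {f g}

theorem pushout_mk_eq_zero_iff {y : Y} {z : Z} :
    Submodule.Quotient.mk (p := range (f.prod (-g))) (y, z) = 0 ↔ ∃ x, f x = y ∧ -g x = z := by
  simp [Submodule.Quotient.mk_eq_zero, Prod.ext_iff]

theorem pushoutInr_injective (hf : Function.Injective f) :
    Function.Injective (pushoutInr f g) := by
  rw [injective_iff_map_eq_zero]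
  intro z hz
  obtain ⟨x, hx, rfl⟩ := pushout_mk_eq_zero_iff.1 hz
  simp [(injective_iff_map_eq_zero f).1 hf x hx]

theorem exact_comp_pushoutInl {K : Type*} [AddCommGroup K] [Module R K] {k : K →ₗ[R] X}
    (hkg : Function.Exact k g) : Function.Exact (f ∘ₗ k) (pushoutInl f g) := by
  intro y
  simp only [pushoutInl, coe_comp, Function.comp_apply, inl_apply, Submodule.mkQ_apply,
    pushout_mk_eq_zero_iff, neg_eq_zero, Set.range_comp]
  constructor
  · rintro ⟨x, rfl, hx⟩
    exact ⟨x, (hkg x).1 hx, rfl⟩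
  · rintro ⟨x, hx, rfl⟩
    exact ⟨x, rfl, (hkg x).2 hx⟩

theorem exists_exact_pushoutInl {h : Z →ₗ[R] C} (hgh : Function.Exact g h)
    (hh : Function.Surjective h) :
    ∃ h' : Pushout f g →ₗ[R] C, Function.Surjective h' ∧ Function.Exact (pushoutInl f g) h' := by
  refine ⟨(range (f.prod (-g))).liftQ (h ∘ₗ snd R Y Z) ?_, fun c => ?_, ?_⟩
  · rintro _ ⟨x, rfl⟩
    simp [hgh.apply_apply_eq_zero]
  · obtain ⟨z, rfl⟩ := hh c
    exact ⟨pushoutInr f g z, rfl⟩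
  · refine fun w => ⟨fun hw => ?_, ?_⟩
    · obtain ⟨⟨y, z⟩, rfl⟩ := Submodule.mkQ_surjective _ w
      obtain ⟨x, rfl⟩ := (hgh z).1 hw
      exact ⟨y + f x, (Submodule.Quotient.eq _).2 ⟨x, by simp⟩⟩
    · rintro ⟨y, rfl⟩
      simp [pushoutInl]

theorem exists_exact_pushoutInr {q : Y →ₗ[R] C} (hfq : Function.Exact f q)
    (hq : Function.Surjective q) :
    ∃ q' : Pushout f g →ₗ[R] C, Function.Surjective q' ∧ Function.Exact (pushoutInr f g) q' := by
  refine ⟨(range (f.prod (-g))).liftQ (q ∘ₗ fst R Y Z) ?_, fun c => ?_, ?_⟩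
  · rintro _ ⟨x, rfl⟩
    simp [hfq.apply_apply_eq_zero]
  · obtain ⟨y, rfl⟩ := hq c
    exact ⟨pushoutInl f g y, rfl⟩
  · refine fun w => ⟨fun hw => ?_, ?_⟩
    · obtain ⟨⟨y, z⟩, rfl⟩ := Submodule.mkQ_surjective _ w
      obtain ⟨x, rfl⟩ := (hfq y).1 hw
      exact ⟨z + g x, (Submodule.Quotient.eq _).2 ⟨-x, by simp⟩⟩
    · rintro ⟨z, rfl⟩
      simp [pushoutInr]

end LinearMap

def HomQPSurjective {Y P : ModuleCat.{u} R} (ι : Y ⟶ P) : Prop :=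
  ∀ Q : ModuleCat.{u} R, QuasiProjective Q → ∀ f : Y ⟶ Q, ∃ g : P ⟶ Q, ι ≫ g = f

def IsExtension (X' X X'' : ModuleCat.{u} R) : Prop :=
  ∃ (i : X' ⟶ X) (p : X ⟶ X''),
    Function.Injective i ∧ Function.Surjective p ∧ Function.Exact i p

/-- `0 → Y → P → X → 0`, as in one degree of the complex defining `QuasiGorensteinProjective`. -/
def QGStep (X Y : ModuleCat.{u} R) : Prop :=
  ∃ (P : ModuleCat.{u} R) (ι : Y ⟶ P) (π : P ⟶ X), Module.Projective R P ∧
    Function.Injective ι ∧ Function.Surjective π ∧ Function.Exact ι π ∧ HomQPSurjective ι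

theorem QGStep.of_iso {X X' Y Y' : ModuleCat.{u} R} (eX : X ≅ X') (eY : Y ≅ Y')
    (h : QGStep X Y) : QGStep X' Y' := by
  obtain ⟨P, ι, π, hP, hι, hπ, hex, hext⟩ := h
  refine ⟨P, eY.inv ≫ ι, π ≫ eX.hom, hP, hι.comp (ConcreteCategory.bijective_of_isIso eY.inv).1,
    (ConcreteCategory.bijective_of_isIso eX.hom).2.comp hπ, fun p => ?_, fun Q _ f => ?_⟩
  · change eX.hom (π p) = 0 ↔ p ∈ Set.range (ι ∘ eY.inv)
    rw [map_eq_zero_iff _ (ConcreteCategory.bijective_of_isIso eX.hom).1,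
      (ConcreteCategory.bijective_of_isIso eY.inv).2.range_comp]
    exact hex p
  · obtain ⟨g, hg⟩ := hext Q ‹_› (eY.hom ≫ f)
    exact ⟨g, by rw [Category.assoc, hg, Iso.inv_hom_id_assoc]⟩

def zigzag {α : Type*} (next prev : α → α) (a : α) : ℤ → α
  | Int.ofNat n => next^[n] a
  | Int.negSucc n => prev^[n + 1] a

section zigzag

variable {α : Type*} (next prev : α → α) (a : α)

theorem zigzag_natCast_add_one (n : ℕ) :
    zigzag next prev a (n + 1) = next (zigzag next prev a n) :=
  Function.iterate_succ_apply' next n a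

theorem zigzag_negSucc (n : ℕ) :
    zigzag next prev a (Int.negSucc n) = prev (zigzag next prev a (Int.negSucc n + 1)) := by
  cases n with
  | zero => rfl
  | succ n => exact Function.iterate_succ_apply' prev (n + 1) a

end zigzag

namespace QuasiGorensteinProjective

theorem of_closed (S : Set (ModuleCat.{u} R)) (hnext : ∀ X ∈ S, ∃ Y ∈ S, QGStep X Y)
    (hprev : ∀ Y ∈ S, ∃ X ∈ S, QGStep X Y) {M : ModuleCat.{u} R} (hM : M ∈ S) :
    QuasiGorensteinProjective M := by
  choose next hnextS hnext using hnext
  choose prev hprevS hprev using hprev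
  let K : ℤ → S := zigzag (fun X => ⟨next X X.2, hnextS X X.2⟩)
    (fun X => ⟨prev X X.2, hprevS X X.2⟩) ⟨M, hM⟩
  have hK : ∀ n, QGStep (K n).1 (K (n + 1)).1 := by
    rintro (n | n)
    · rw [Int.ofNat_eq_natCast, show K (n + 1) = _ from zigzag_natCast_add_one _ _ _ n]
      exact hnext _ _
    · rw [show K (.negSucc n) = _ from zigzag_negSucc _ _ _ n]
      exact hprev _ _
  choose P ι π hP hι hπ hex hext using hK
  exact ⟨fun n => (K n).1, P, ι, π, hP, hι, hπ, hex, hext, ⟨Iso.refl M⟩⟩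

theorem of_chain (K : ℤ → ModuleCat.{u} R) (hK : ∀ n, QGStep (K n) (K (n + 1))) (n : ℤ) :
    QuasiGorensteinProjective (K n) := by
  refine of_closed (Set.range K) ?_ ?_ ⟨n, rfl⟩
  · rintro _ ⟨m, rfl⟩
    exact ⟨_, ⟨m + 1, rfl⟩, hK m⟩
  · rintro _ ⟨m, rfl⟩
    exact ⟨_, ⟨m - 1, rfl⟩, (hK (m - 1)).of_iso (Iso.refl _) (eqToIso (by simp))⟩

theorem exists_chain {M : ModuleCat.{u} R} (hM : QuasiGorensteinProjective M) :
    ∃ K : ℤ → ModuleCat.{u} R, (∀ n, QGStep (K n) (K (n + 1))) ∧ Nonempty (M ≅ K 0) := by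
  obtain ⟨K, P, ι, π, hP, hι, hπ, hex, hext, hM⟩ := hM
  exact ⟨K, fun n => ⟨P n, ι n, π n, hP n, hι n, hπ n, hex n, hext n⟩, hM⟩

theorem exists_syzygy {M : ModuleCat.{u} R} (hM : QuasiGorensteinProjective M) :
    ∃ Y, QGStep M Y ∧ QuasiGorensteinProjective Y := by
  obtain ⟨K, hK, ⟨e⟩⟩ := hM.exists_chain
  exact ⟨K 1, (hK 0).of_iso e.symm (Iso.refl _), of_chain K hK 1⟩

theorem exists_cosyzygy {M : ModuleCat.{u} R} (hM : QuasiGorensteinProjective M) :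
    ∃ X, QGStep X M ∧ QuasiGorensteinProjective X := by
  obtain ⟨K, hK, ⟨e⟩⟩ := hM.exists_chain
  exact ⟨K (-1), (hK (-1)).of_iso (Iso.refl _) (eqToIso (by simp) ≪≫ e.symm), of_chain K hK (-1)⟩

end QuasiGorensteinProjective

theorem HomQPSurjective.prod_of_extension {Y' Y Y'' P' P'' : ModuleCat.{u} R}
    {i : Y' ⟶ Y} {q : Y ⟶ Y''} (hq : Function.Surjective q) (hiq : Function.Exact i q)
    {ι' : Y' ⟶ P'} {ι'' : Y'' ⟶ P''} (h' : HomQPSurjective ι') (h'' : HomQPSurjective ι'')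
    (ι : Y ⟶ ModuleCat.of R (P' × P'')) (hι₁ : ∀ y', (ι (i y')).1 = ι' y')
    (hι₂ : ∀ y, (ι y).2 = ι'' (q y)) : HomQPSurjective ι := by
  intro Q hQ f
  obtain ⟨g', hg'⟩ := h' Q hQ (i ≫ f)
  replace hg' : ∀ y', g' (ι' y') = f (i y') := fun y' => congr($hg' y')
  -- `f - g' ∘ fst ∘ ι` vanishes on `Y'`, so it comes from `Y''` and extends along `ι''`.
  obtain ⟨h, hh⟩ := ModuleCat.exists_desc_of_surjective hq
    (f - ι ≫ ModuleCat.ofHom (LinearMap.fst R P' P'') ≫ g') (by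
      intro y hy
      obtain ⟨y', rfl⟩ := (hiq y).1 hy
      simp [hι₁, hg'])
  obtain ⟨g'', hg''⟩ := h'' Q hQ h
  replace hg'' : ∀ y'', g'' (ι'' y'') = h y'' := fun y'' => congr($hg'' y'')
  refine ⟨ModuleCat.ofHom (g'.hom.coprod g''.hom), ?_⟩
  ext y
  have := hh y
  simp only [ModuleCat.hom_sub, ModuleCat.hom_comp, ModuleCat.hom_ofHom] at this
  simp [hι₂, hg'', this]

theorem HomQPSurjective.of_extension_of_qgStep {Y' Y Y'' Z'' : ModuleCat.{u} R}
    {i : Y' ⟶ Y} {q : Y ⟶ Y''} (hi : Function.Injective i) (hq : Function.Surjective q)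
    (hiq : Function.Exact i q) (hY'' : QGStep Y'' Z'') : HomQPSurjective i := by
  obtain ⟨P, ι, π, hP, hι, hπ, hex, hext⟩ := hY''
  obtain ⟨t, ht⟩ := Module.projective_lifting_property q.hom π.hom hq
  replace ht : ∀ p, q (t p) = π p := LinearMap.congr_fun ht
  obtain ⟨s, hs⟩ := ModuleCat.exists_lift_of_exact hiq hi (ι ≫ ModuleCat.ofHom t)
    (fun z => by simp [ht, hex.apply_apply_eq_zero])
  replace hs : ∀ z, i (s z) = t (ι z) := hs
  -- `Y` is the pushout of `ι` and `s`, so `f` and an extension `g` of `s ≫ f` glue.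
  intro Q hQ f
  obtain ⟨g, hg⟩ := hext Q hQ (s ≫ f)
  replace hg : ∀ z, g (ι z) = f (s z) := fun z => congr($hg z)
  have hsurj : Function.Surjective (i.hom.coprod t) := by
    intro y
    obtain ⟨p, hp⟩ := hπ (q y)
    obtain ⟨y', hy'⟩ := (hiq (y - t p)).1 (by simp [ht, hp])
    exact ⟨(y', p), by simp [hy']⟩
  obtain ⟨F, hF⟩ := ModuleCat.exists_desc_of_surjective
    (q := ModuleCat.ofHom (i.hom.coprod t)) hsurj (ModuleCat.ofHom (f.hom.coprod g.hom)) (by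
      rintro ⟨y', p⟩ h
      replace h : i y' + t p = 0 := h
      obtain ⟨z, rfl⟩ := (hex p).1 (by simpa [ht, hiq.apply_apply_eq_zero] using congr(q $h))
      obtain rfl : y' = -s z := hi (by rw [map_neg, hs]; exact eq_neg_of_add_eq_zero_left h)
      simp [hg])
  exact ⟨F, by ext y'; simpa using hF (y', 0)⟩

theorem exists_surjective_prod_of_exact {X' X X'' P' P'' : ModuleCat.{u} R}
    [Module.Projective R P''] {i : X' ⟶ X} {p : X ⟶ X''} (hp : Function.Surjective p)
    (hip : Function.Exact i p) {π' : P' ⟶ X'} (hπ' : Function.Surjective π')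
    {π'' : P'' ⟶ X''} (hπ'' : Function.Surjective π'') :
    ∃ π : P' × P'' →ₗ[R] X, Function.Surjective π ∧
      (∀ a, π (a, 0) = i (π' a)) ∧ ∀ v, p (π v) = π'' v.2 := by
  obtain ⟨t, ht⟩ := Module.projective_lifting_property p.hom π''.hom hp
  replace ht : ∀ b, p (t b) = π'' b := LinearMap.congr_fun ht
  refine ⟨(i.hom ∘ₗ π'.hom).coprod t, fun x => ?_, fun a => by simp,
    fun v => by simp [ht, hip.apply_apply_eq_zero]⟩
  obtain ⟨b, hb⟩ := hπ'' (p x)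
  obtain ⟨x', hx'⟩ := (hip (x - t b)).1 (by simp [ht, hb])
  obtain ⟨a, rfl⟩ := hπ' x'
  exact ⟨(a, b), by simp [hx']⟩

theorem surjective_and_exact_of_ker_prod {X' X X'' Y' Y'' P' P'' : ModuleCat.{u} R}
    {i : X' ⟶ X} {p : X ⟶ X''} (hi : Function.Injective i) (hip : Function.Exact i p)
    {ι' : Y' ⟶ P'} {π' : P' ⟶ X'} (hπ' : Function.Surjective π') (hex' : Function.Exact ι' π')
    {ι'' : Y'' ⟶ P''} {π'' : P'' ⟶ X''} (hι'' : Function.Injective ι'')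
    (hex'' : Function.Exact ι'' π'') {π : P' × P'' →ₗ[R] X} (hπ₁ : ∀ a, π (a, 0) = i (π' a))
    (hπ₂ : ∀ v, p (π v) = π'' v.2) (j : Y' ⟶ ModuleCat.of R (LinearMap.ker π))
    (hj : ∀ y', (j y' : P' × P'') = (ι' y', 0)) (k : ModuleCat.of R (LinearMap.ker π) ⟶ Y'')
    (hk : ∀ v, ι'' (k v) = (v : P' × P'').2) :
    Function.Surjective k ∧ Function.Exact j k := by
  refine ⟨fun y'' => ?_, fun v => ⟨fun hv => ?_, ?_⟩⟩
  · obtain ⟨x', hx'⟩ := (hip (π (0, ι'' y''))).1 (by simp [hπ₂, hex''.apply_apply_eq_zero])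
    obtain ⟨a, rfl⟩ := hπ' x'
    refine ⟨⟨(-a, ι'' y''), ?_⟩, hι'' ?_⟩
    · rw [LinearMap.mem_ker, show ((-a, ι'' y'') : P' × P'') = (0, ι'' y'') - (a, 0) by simp,
        map_sub, hπ₁, hx', sub_self]
    · rw [hk]
  · have h2 : (v : P' × P'').2 = 0 := by rw [← hk, hv, map_zero]
    have hv : π ((v : P' × P'').1, 0) = 0 := by rw [← h2]; exact v.2
    rw [hπ₁] at hv
    obtain ⟨y', hy'⟩ := (hex' (v : P' × P'').1).1 ((injective_iff_map_eq_zero _).1 hi _ hv)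
    exact ⟨y', Subtype.ext (by rw [hj, hy', ← h2])⟩
  · rintro ⟨y', rfl⟩
    exact hι'' (by rw [hk, hj, map_zero])

theorem QGStep.horseshoe_syzygy {X' X X'' Y' Y'' : ModuleCat.{u} R}
    (hX : IsExtension X' X X'') (h' : QGStep X' Y') (h'' : QGStep X'' Y'') :
    ∃ Y, IsExtension Y' Y Y'' ∧ QGStep X Y := by
  obtain ⟨i, p, hi, hp, hip⟩ := hX
  obtain ⟨P', ι', π', hP', hι', hπ', hex', hext'⟩ := h'
  obtain ⟨P'', ι'', π'', hP'', hι'', hπ'', hex'', hext''⟩ := h''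
  obtain ⟨π, hπ, hπ₁, hπ₂⟩ := exists_surjective_prod_of_exact hp hip hπ' hπ''
  let j : Y' ⟶ ModuleCat.of R (LinearMap.ker π) := ModuleCat.ofHom
    (LinearMap.codRestrict _ (LinearMap.inl R P' P'' ∘ₗ ι'.hom) fun y' => by
      simp [hπ₁, hex'.apply_apply_eq_zero])
  obtain ⟨k, hk⟩ := ModuleCat.exists_lift_of_exact hex'' hι''
    (ModuleCat.ofHom (LinearMap.snd R P' P'' ∘ₗ (LinearMap.ker π).subtype))
    (fun v => by simp [← hπ₂])
  obtain ⟨hk_surj, hjk⟩ := surjective_and_exact_of_ker_prod hi hip hπ' hex' hι'' hex'' hπ₁ hπ₂ j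
    (fun _ => rfl) k hk
  refine ⟨ModuleCat.of R (LinearMap.ker π),
    ⟨j, k, fun a b h => hι' congr(($h : P' × P'').1), hk_surj, hjk⟩,
    ModuleCat.of R (P' × P''), ModuleCat.ofHom (LinearMap.ker π).subtype, ModuleCat.ofHom π,
    inferInstance, Subtype.val_injective, hπ, LinearMap.exact_subtype_ker_map π,
    HomQPSurjective.prod_of_extension hk_surj hjk hext' hext'' _ (fun _ => rfl)
      fun v => (hk v).symm⟩

theorem isExtension_of_coker_prod {Y' Y Y'' X' X'' P' P'' : ModuleCat.{u} R}
    {i : Y' ⟶ Y} {q : Y ⟶ Y''} (hq : Function.Surjective q) (hiq : Function.Exact i q)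
    {ι' : Y' ⟶ P'} {π' : P' ⟶ X'} (hπ' : Function.Surjective π') (hex' : Function.Exact ι' π')
    {ι'' : Y'' ⟶ P''} {π'' : P'' ⟶ X''} (hι'' : Function.Injective ι'')
    (hπ'' : Function.Surjective π'') (hex'' : Function.Exact ι'' π'')
    {ι : Y →ₗ[R] P' × P''} (hι₁ : ∀ y', (ι (i y')).1 = ι' y') (hι₂ : ∀ y, (ι y).2 = ι'' (q y)) :
    IsExtension X' (ModuleCat.of R ((P' × P'') ⧸ LinearMap.range ι)) X'' := by
  let mk : ModuleCat.of R (P' × P'') ⟶ ModuleCat.of R ((P' × P'') ⧸ LinearMap.range ι) :=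
    ModuleCat.ofHom (LinearMap.range ι).mkQ
  have hmk : ∀ v, mk v = 0 ↔ v ∈ Set.range ι := LinearMap.exact_map_mkQ_range ι
  have hι_ker : ∀ y, (ι y).2 = 0 → ∃ y', i y' = y := fun y hy =>
    (hiq y).1 ((injective_iff_map_eq_zero _).1 hι'' _ (by rw [← hι₂, hy]))
  obtain ⟨j, hj⟩ := ModuleCat.exists_desc_of_surjective hπ'
    (ModuleCat.ofHom (mk.hom ∘ₗ LinearMap.inl R P' P'')) (by
      intro a ha
      obtain ⟨y', rfl⟩ := (hex' a).1 ha
      refine (hmk _).2 ⟨i y', Prod.ext (hι₁ y') ?_⟩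
      simp [hι₂, hiq.apply_apply_eq_zero])
  obtain ⟨k, hk⟩ := ModuleCat.exists_desc_of_surjective (q := mk) (Submodule.mkQ_surjective _)
    (ModuleCat.ofHom (π''.hom ∘ₗ LinearMap.snd R P' P'')) (by
      intro v hv
      obtain ⟨y, rfl⟩ := (hmk v).1 hv
      simp [hι₂, hex''.apply_apply_eq_zero])
  replace hj : ∀ a, j (π' a) = mk (a, 0) := hj
  replace hk : ∀ v, k (mk v) = π'' v.2 := hk
  refine ⟨j, k, (injective_iff_map_eq_zero _).2 fun x hx => ?_, fun x'' => ?_,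
    fun x => ⟨fun hx => ?_, ?_⟩⟩
  · obtain ⟨a, rfl⟩ := hπ' x
    obtain ⟨y, hy⟩ := (hmk _).1 (by rw [← hj]; exact hx)
    obtain ⟨y', rfl⟩ := hι_ker y (by rw [hy])
    rw [← show ι' y' = a by rw [← hι₁, hy], hex'.apply_apply_eq_zero]
  · obtain ⟨b, rfl⟩ := hπ'' x''
    exact ⟨mk (0, b), hk _⟩
  · obtain ⟨v, rfl⟩ : ∃ v, mk v = x := Submodule.mkQ_surjective _ x
    obtain ⟨y'', hy''⟩ := (hex'' v.2).1 (by rw [← hk]; exact hx)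
    obtain ⟨y, rfl⟩ := hq y''
    refine ⟨π' (v.1 - (ι y).1), ?_⟩
    rw [hj, ← sub_eq_zero, ← map_sub, hmk]
    exact ⟨-y, by ext <;> simp [hι₂, hy'']⟩
  · rintro ⟨x', rfl⟩
    obtain ⟨a, rfl⟩ := hπ' x'
    rw [hj, hk, map_zero]

theorem QGStep.horseshoe_cosyzygy {X' X'' Y' Y Y'' Z'' : ModuleCat.{u} R}
    (hY : IsExtension Y' Y Y'') (h' : QGStep X' Y') (h'' : QGStep X'' Y'')
    (hY'' : QGStep Y'' Z'') : ∃ X, IsExtension X' X X'' ∧ QGStep X Y := by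
  obtain ⟨i, q, hi, hq, hiq⟩ := hY
  obtain ⟨P', ι', π', hP', hι', hπ', hex', hext'⟩ := h'
  obtain ⟨P'', ι'', π'', hP'', hι'', hπ'', hex'', hext''⟩ := h''
  obtain ⟨e, he⟩ := HomQPSurjective.of_extension_of_qgStep hi hq hiq hY'' P'
    QuasiProjective.of_projective ι'
  replace he : ∀ y', e (i y') = ι' y' := fun y' => congr($he y')
  let ι : Y →ₗ[R] P' × P'' := e.hom.prod (ι''.hom ∘ₗ q.hom)
  have hι : Function.Injective ι := by
    rw [injective_iff_map_eq_zero]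
    intro y hy
    obtain ⟨y', rfl⟩ := (hiq y).1 ((injective_iff_map_eq_zero _).1 hι'' _ congr($hy.2))
    rw [(injective_iff_map_eq_zero _).1 hι' y' (by simpa [ι, he] using congr($hy.1)), map_zero]
  exact ⟨_, isExtension_of_coker_prod hq hiq hπ' hex' hι'' hπ'' hex'' (ι := ι) he fun _ => rfl,
    ModuleCat.of R (P' × P''), ModuleCat.ofHom ι, ModuleCat.ofHom (LinearMap.range ι).mkQ,
    inferInstance, hι, Submodule.mkQ_surjective _, LinearMap.exact_map_mkQ_range ι,
    HomQPSurjective.prod_of_extension hq hiq hext' hext'' _ he fun _ => rfl⟩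

theorem QuasiGorensteinProjective.of_extension {M' M M'' : ModuleCat.{u} R}
    (hM : IsExtension M' M M'') (h' : QuasiGorensteinProjective M')
    (h'' : QuasiGorensteinProjective M'') : QuasiGorensteinProjective M := by
  refine of_closed {X | ∃ X' X'', IsExtension X' X X'' ∧
    QuasiGorensteinProjective X' ∧ QuasiGorensteinProjective X''} ?_ ?_ ⟨M', M'', hM, h', h''⟩
  · rintro X ⟨X', X'', hX, hX', hX''⟩
    obtain ⟨Y', hXY', hY'⟩ := hX'.exists_syzygy
    obtain ⟨Y'', hXY'', hY''⟩ := hX''.exists_syzygy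
    obtain ⟨Y, hY, hXY⟩ := QGStep.horseshoe_syzygy hX hXY' hXY''
    exact ⟨Y, ⟨Y', Y'', hY, hY', hY''⟩, hXY⟩
  · rintro Y ⟨Y', Y'', hY, hY', hY''⟩
    obtain ⟨X', hXY', hX'⟩ := hY'.exists_cosyzygy
    obtain ⟨X'', hXY'', hX''⟩ := hY''.exists_cosyzygy
    obtain ⟨Z'', hYZ'', -⟩ := hY''.exists_syzygy
    obtain ⟨X, hX, hXY⟩ := QGStep.horseshoe_cosyzygy hY hXY' hXY'' hYZ''
    exact ⟨X, ⟨X', X'', hX, hX', hX''⟩, hXY⟩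

/-- If `K → G₁ → G₀ → A` is an exact complex with `G₀, G₁` quasi-Gorenstein
projective, then there is an exact complex `K → P₀ → G₀' → A` with `P₀`
projective and `G₀'` quasi-Gorenstein projective. -/
theorem exists_exact_complex_with_projective_first
    {K G₁ G₀ A K₁ : ModuleCat.{u} R}
    (a : K ⟶ G₁) (b : G₁ ⟶ K₁) (c : K₁ ⟶ G₀) (d : G₀ ⟶ A)
    (ha : Function.Injective a) (hb : Function.Surjective b)
    (hab : Function.Exact a b)
    (hc : Function.Injective c) (hd : Function.Surjective d)
    (hcd : Function.Exact c d)
    (hG₁ : QuasiGorensteinProjective G₁) (hG₀ : QuasiGorensteinProjective G₀) :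
    ∃ (P₀ G₀' L : ModuleCat.{u} R)
      (a' : K ⟶ P₀) (b' : P₀ ⟶ L) (c' : L ⟶ G₀') (d' : G₀' ⟶ A),
      Module.Projective R P₀ ∧ QuasiGorensteinProjective G₀' ∧
      Function.Injective a' ∧ Function.Surjective b' ∧ Function.Exact a' b' ∧
      Function.Injective c' ∧ Function.Surjective d' ∧ Function.Exact c' d' := by
  obtain ⟨G₁', ⟨P₀, ε, π, hP₀, hε, hπ, hεπ, -⟩, hG₁'⟩ := hG₁.exists_cosyzygy
  let g := (b ≫ c).hom
  have hag : Function.Exact a g := (hc.comp_exact_iff_exact (i := c.hom)).2 hab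
  have hgd : Function.Exact g d := (hb.comp_exact_iff_exact (p := b.hom)).2 hcd
  let G₀' := ModuleCat.of R (LinearMap.Pushout ε.hom g)
  obtain ⟨q, hq, hG₀G₀'⟩ := LinearMap.exists_exact_pushoutInr (g := g) hεπ hπ
  obtain ⟨d', hd', hP₀d'⟩ := LinearMap.exists_exact_pushoutInl (f := ε.hom) hgd hd
  have hG₀' : QuasiGorensteinProjective G₀' := .of_extension
    ⟨ModuleCat.ofHom (LinearMap.pushoutInr ε.hom g), ModuleCat.ofHom q,
      LinearMap.pushoutInr_injective hε, hq, hG₀G₀'⟩ hG₀ hG₁'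
  obtain ⟨L, b', c', hb', hab', hc', hcd'⟩ := ModuleCat.exists_factor_range_of_exact
    (a := a ≫ ε) (φ := ModuleCat.ofHom (LinearMap.pushoutInl ε.hom g)) (d := ModuleCat.ofHom d')
    (LinearMap.exact_comp_pushoutInl hag) hP₀d'
  exact ⟨P₀, G₀', L, a ≫ ε, b', c', ModuleCat.ofHom d', hP₀, hG₀', hε.comp ha, hb', hab', hc',
    hd', hcd'⟩
end
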